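/- arXiv:2304.08161 — 3 statements merged into one kernel-verified Lean document; each statement's English description precedes it below -/
import Mathlib

section
/- Let τ > 0, let ν be a finite signed Borel measure on [-τ,0], let r be the differential resolvent of ν, extended by r(t) = 0 for t < 0, and suppose |r(t)| ≤ K e^{-α t} for all t ≥ 0, where K > 0 and α > 0. Let f : [0,∞) → ℝ be continuous and suppose there exist β₂ > 0 and C > 0 such that |∫_0^t e^{β₂ s} f(s) ds| ≤ C for all t ≥ 0. Then for every ε ∈ (0, α) there exists a constant C' > 0 such that |(r ∗ f)(t)| ≤ C' e^{-min(α-ε, β₂) t} for all t ≥ 0. -/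
open MeasureTheory Filter Set

/-- Integral of a real function against a finite signed Borel measure, defined through the
Jordan decomposition. -/
noncomputable def sInt (μ : MeasureTheory.SignedMeasure ℝ) (f : ℝ → ℝ) : ℝ :=
  (∫ s, f s ∂μ.toJordanDecomposition.posPart) - (∫ s, f s ∂μ.toJordanDecomposition.negPart)

/-- `r` is the differential resolvent of the finite signed measure `ν` on `[-τ,0]`:
it vanishes on `(-∞,0)`, is continuous on `[0,∞)`, and satisfies
`r(t) = 1 + ∫_0^t ∫_{[-τ,0]} r(s+u) dν(u) ds` for `t ≥ 0` (the extension of `r` by zero on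
the negative half-line makes the inner integral equal to the one over `[max(-τ,-s),0]`). -/
def IsResolvent (ν : MeasureTheory.SignedMeasure ℝ) (r : ℝ → ℝ) : Prop :=
  (∀ t < (0:ℝ), r t = 0) ∧ ContinuousOn r (Set.Ici (0:ℝ)) ∧
    ∀ t ≥ (0:ℝ), r t = 1 + ∫ s in (0:ℝ)..t, sInt ν (fun u => r (s + u))

/-- bounded measurable functions are interval integrable -/
lemma boundedIntInt {h : ℝ → ℝ} (hm : Measurable h) (B : ℝ) (hb : ∀ x, |h x| ≤ B)
    (a b : ℝ) : IntervalIntegrable h volume a b := by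
  rw [intervalIntegrable_iff]
  haveI : IsFiniteMeasure (volume.restrict (Set.uIoc a b)) :=
    ⟨by rw [Measure.restrict_apply_univ]; exact measure_Ioc_lt_top⟩
  refine (integrable_const B).mono' hm.aestronglyMeasurable ?_
  exact Filter.Eventually.of_forall (fun x => by simpa using hb x)

lemma fubini_triangle (φ ψ : ℝ → ℝ) (hφ : Continuous φ) (hψ : Measurable ψ)
    (Mψ : ℝ) (hψb : ∀ x, |ψ x| ≤ Mψ) (t : ℝ) (ht : 0 ≤ t) :
    ∫ s in (0:ℝ)..t, φ s * ∫ u in s..t, ψ u = ∫ u in (0:ℝ)..t, ψ u * ∫ s in (0:ℝ)..u, φ s := by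
  obtain ⟨Mφ, hMφ⟩ := (isCompact_Icc (a := (0:ℝ)) (b := t)).exists_bound_of_continuousOn
    hφ.continuousOn
  set S : Set ℝ := Ioc (0:ℝ) t with hS
  have hSm : MeasurableSet S := measurableSet_Ioc
  have hSfin : volume S < ⊤ := measure_Ioc_lt_top
  have hfinS : IsFiniteMeasure (volume.restrict S) :=
    ⟨by rwa [Measure.restrict_apply_univ]⟩
  set F : ℝ → ℝ → ℝ := fun s u => if s < u then φ s * ψ u else 0 with hF
  have hFm : Measurable (Function.uncurry F) := by
    have : Function.uncurry F = fun p : ℝ × ℝ =>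
        Set.indicator {p : ℝ × ℝ | p.1 < p.2} (fun p => φ p.1 * ψ p.2) p := by
      funext p
      by_cases h : p.1 < p.2 <;>
        simp [Function.uncurry, hF, h, Set.indicator_of_mem, Set.indicator_of_notMem]
    rw [this]
    exact Measurable.indicator
      ((hφ.measurable.comp measurable_fst).mul (hψ.comp measurable_snd))
      (isOpen_lt continuous_fst continuous_snd).measurableSet
  have hFint : Integrable (Function.uncurry F) ((volume.restrict S).prod (volume.restrict S)) := by
    refine (integrable_const (Mφ * |Mψ|)).mono' hFm.aestronglyMeasurable ?_
    rw [Measure.prod_restrict]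
    refine (MeasureTheory.ae_restrict_iff' (hSm.prod hSm)).2
      (Filter.Eventually.of_forall (fun p hp => ?_))
    obtain ⟨hp1, hp2⟩ := hp
    have h1 : |φ p.1| ≤ Mφ := hMφ p.1 ⟨le_of_lt hp1.1, hp1.2⟩
    have h2 : |ψ p.2| ≤ |Mψ| := le_trans (hψb p.2) (le_abs_self Mψ)
    by_cases h : p.1 < p.2
    · simp only [Function.uncurry, hF, if_pos h, Real.norm_eq_abs, abs_mul]
      exact mul_le_mul h1 h2 (abs_nonneg _) (le_trans (abs_nonneg _) h1)
    · simp only [Function.uncurry, hF, if_neg h, Real.norm_eq_abs, abs_zero]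
      exact mul_nonneg (le_trans (abs_nonneg _) h1) (abs_nonneg _)
  have key : ∫ s in S, ∫ u in S, F s u = ∫ u in S, ∫ s in S, F s u :=
    MeasureTheory.integral_integral_swap hFint
  have lhs_eq : ∫ s in (0:ℝ)..t, φ s * ∫ u in s..t, ψ u = ∫ s in S, ∫ u in S, F s u := by
    rw [intervalIntegral.integral_of_le ht]
    refine MeasureTheory.setIntegral_congr_fun hSm (fun s hs => ?_)
    have : ∀ u, F s u = Set.indicator (Ioi s) (fun u => φ s * ψ u) u := by
      intro u
      by_cases h : s < u <;> simp [hF, h, Set.indicator_of_mem, Set.indicator_of_notMem]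
    simp_rw [this]
    rw [MeasureTheory.setIntegral_indicator measurableSet_Ioi]
    have hint : S ∩ Ioi s = Ioc s t := by
      ext x; simp only [hS, mem_inter_iff, mem_Ioc, mem_Ioi]
      constructor
      · rintro ⟨⟨_, hx2⟩, hx3⟩; exact ⟨hx3, hx2⟩
      · rintro ⟨hx1, hx2⟩; exact ⟨⟨lt_of_le_of_lt (le_of_lt hs.1) hx1, hx2⟩, hx1⟩
    rw [hint, intervalIntegral.integral_of_le hs.2, MeasureTheory.integral_const_mul]
  have rhs_eq : ∫ u in (0:ℝ)..t, ψ u * ∫ s in (0:ℝ)..u, φ s = ∫ u in S, ∫ s in S, F s u := by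
    rw [intervalIntegral.integral_of_le ht]
    refine MeasureTheory.setIntegral_congr_fun hSm (fun u hu => ?_)
    have : ∀ s, F s u = Set.indicator (Iio u) (fun s => φ s * ψ u) s := by
      intro s
      by_cases h : s < u <;> simp [hF, h, Set.indicator_of_mem, Set.indicator_of_notMem]
    simp_rw [this]
    rw [MeasureTheory.setIntegral_indicator measurableSet_Iio]
    have hint : S ∩ Iio u = Ioo 0 u := by
      ext x; simp only [hS, mem_inter_iff, mem_Ioc, mem_Iio, mem_Ioo]
      constructor
      · rintro ⟨⟨hx1, _⟩, hx3⟩; exact ⟨hx1, hx3⟩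
      · rintro ⟨hx1, hx2⟩; exact ⟨⟨hx1, le_trans (le_of_lt hx2) hu.2⟩, hx2⟩
    rw [hint, intervalIntegral.integral_of_le (le_of_lt hu.1),
      MeasureTheory.integral_Ioc_eq_integral_Ioo]
    simp_rw [mul_comm (φ _) (ψ u)]
    rw [MeasureTheory.integral_const_mul]
  rw [lhs_eq, key, ← rhs_eq]

lemma resolvent_measurable {r : ℝ → ℝ} (h0 : ∀ t < (0:ℝ), r t = 0)
    (hc : ContinuousOn r (Set.Ici 0)) : Measurable r := by
  have hcont : Continuous (fun t => r (max t 0)) :=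
    hc.comp_continuous (continuous_id.max continuous_const) (fun x => Set.mem_Ici.2 (le_max_right _ _))
  have : r = fun t => if t < 0 then 0 else r (max t 0) := by
    funext t
    by_cases h : t < 0
    · simp [h, h0 t h]
    · simp [h, max_eq_left (not_lt.1 h)]
  rw [this]
  exact Measurable.ite measurableSet_Iio measurable_const hcont.measurable

lemma tail_bound {f₀ : ℝ → ℝ} (hf₀ : Continuous f₀) {β₂ C : ℝ} (hβ₂ : 0 < β₂) (hC : 0 < C)
    (hG : ∀ s ≥ (0:ℝ), |∫ σ in (0:ℝ)..s, Real.exp (β₂ * σ) * f₀ σ| ≤ C) :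
    ∀ t ≥ (0:ℝ), ∀ u ∈ Set.Icc (0:ℝ) t, |∫ s in u..t, f₀ s| ≤ 3 * C * Real.exp (-β₂ * u) := by
  intro t ht u hu
  set h : ℝ → ℝ := fun σ => Real.exp (β₂ * σ) * f₀ σ with hh
  have hcont : Continuous h := by
    exact (Real.continuous_exp.comp (continuous_const.mul continuous_id)).mul hf₀
  set G : ℝ → ℝ := fun s => ∫ σ in (0:ℝ)..s, h σ with hGdef
  have hGd : ∀ x : ℝ, HasDerivAt G (h x) x := fun x =>
    intervalIntegral.integral_hasDerivAt_right (hcont.intervalIntegrable _ _)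
      (hcont.stronglyMeasurable.stronglyMeasurableAtFilter) hcont.continuousAt
  have hGc : Continuous G := continuous_iff_continuousAt.2 (fun x => (hGd x).continuousAt)
  have hvd : ∀ x : ℝ, HasDerivAt (fun y => Real.exp (-β₂ * y))
      (Real.exp (-β₂ * x) * (-β₂)) x := by
    intro x
    have := ((hasDerivAt_id x).const_mul (-β₂)).exp
    simpa [mul_comm] using this
  have hvc : Continuous (fun y => Real.exp (-β₂ * y) * (-β₂)) := by
    exact (Real.continuous_exp.comp (continuous_const.mul continuous_id)).mul continuous_const
  have ibp := intervalIntegral.integral_deriv_mul_eq_sub (u := G)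
    (v := fun y => Real.exp (-β₂ * y)) (u' := h)
    (v' := fun y => Real.exp (-β₂ * y) * (-β₂))
    (fun x _ => hGd x) (fun x _ => hvd x)
    (hcont.intervalIntegrable u t) (hvc.intervalIntegrable u t)
  have hsimp : ∀ x : ℝ, h x * Real.exp (-β₂ * x) + G x * (Real.exp (-β₂ * x) * (-β₂))
      = f₀ x + G x * (Real.exp (-β₂ * x) * (-β₂)) := by
    intro x
    have h1 : Real.exp (β₂ * x) * Real.exp (-β₂ * x) = 1 := by
      rw [← Real.exp_add]; ring_nf; exact Real.exp_zero
    have : h x * Real.exp (-β₂ * x)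
        = f₀ x * (Real.exp (β₂ * x) * Real.exp (-β₂ * x)) := by rw [hh]; ring
    rw [this, h1, mul_one]
  rw [show (fun x => h x * Real.exp (-β₂ * x) + G x * (Real.exp (-β₂ * x) * (-β₂)))
      = fun x => f₀ x + G x * (Real.exp (-β₂ * x) * (-β₂)) from funext hsimp] at ibp
  have hGint : IntervalIntegrable (fun x => G x * (Real.exp (-β₂ * x) * (-β₂))) volume u t :=
    (hGc.mul hvc).intervalIntegrable u t
  rw [intervalIntegral.integral_add (hf₀.intervalIntegrable u t) hGint] at ibp
  have eqD : ∫ s in u..t, f₀ s = G t * Real.exp (-β₂ * t) - G u * Real.exp (-β₂ * u)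
      - ∫ x in u..t, G x * (Real.exp (-β₂ * x) * (-β₂)) := by linarith [ibp]
  have hbd : |∫ x in u..t, G x * (Real.exp (-β₂ * x) * (-β₂))|
      ≤ C * Real.exp (-β₂ * u) - C * Real.exp (-β₂ * t) := by
    have hle := intervalIntegral.norm_integral_le_of_norm_le
      (f := fun x => G x * (Real.exp (-β₂ * x) * (-β₂)))
      (g := fun x => C * (Real.exp (-β₂ * x) * β₂)) (μ := volume) (a := u) (b := t) hu.2 ?_ ?_
    · have hval : ∫ x in u..t, C * (Real.exp (-β₂ * x) * β₂)
          = C * Real.exp (-β₂ * u) - C * Real.exp (-β₂ * t) := by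
        have hF : ∀ x : ℝ, HasDerivAt (fun y => -(C * Real.exp (-β₂ * y)))
            (C * (Real.exp (-β₂ * x) * β₂)) x := by
          intro x
          have := ((hvd x).const_mul C).neg
          exact this.congr_deriv (by ring)
        rw [intervalIntegral.integral_eq_sub_of_hasDerivAt (fun x _ => hF x)
          ((by fun_prop : Continuous fun x : ℝ => C * (Real.exp (-β₂ * x) * β₂)).intervalIntegrable u t)]
        ring
      rw [hval] at hle
      have hnn : 0 ≤ C * Real.exp (-β₂ * u) - C * Real.exp (-β₂ * t) := by
        have : Real.exp (-β₂ * t) ≤ Real.exp (-β₂ * u) := by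
          apply Real.exp_le_exp.2
          nlinarith [hu.2]
        nlinarith
      rwa [Real.norm_eq_abs] at hle
    · refine (Filter.Eventually.of_forall fun x hx => ?_)
      have hx0 : (0:ℝ) ≤ x := le_trans hu.1 (le_of_lt hx.1)
      have hGx : |G x| ≤ C := hG x hx0
      have hepos : 0 < Real.exp (-β₂ * x) * β₂ :=
        mul_pos (Real.exp_pos _) hβ₂
      calc ‖G x * (Real.exp (-β₂ * x) * (-β₂))‖
          = |G x| * (Real.exp (-β₂ * x) * β₂) := by
            rw [Real.norm_eq_abs, abs_mul]
            congr 1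
            rw [abs_of_nonpos (by nlinarith [Real.exp_pos (-β₂ * x)])]
            ring
        _ ≤ C * (Real.exp (-β₂ * x) * β₂) :=
            mul_le_mul_of_nonneg_right hGx (le_of_lt hepos)
    · exact (by fun_prop : Continuous fun x : ℝ => C * (Real.exp (-β₂ * x) * β₂)).intervalIntegrable u t
  have hGt : |G t| ≤ C := hG t ht
  have hGu : |G u| ≤ C := hG u hu.1
  have het : Real.exp (-β₂ * t) ≤ Real.exp (-β₂ * u) := by
    apply Real.exp_le_exp.2; nlinarith [hu.2]
  have heu : 0 < Real.exp (-β₂ * u) := Real.exp_pos _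
  have het0 : 0 < Real.exp (-β₂ * t) := Real.exp_pos _
  rw [eqD]
  have h1 : |G t * Real.exp (-β₂ * t)| ≤ C * Real.exp (-β₂ * u) := by
    rw [abs_mul, abs_of_pos het0]
    calc |G t| * Real.exp (-β₂ * t) ≤ C * Real.exp (-β₂ * t) :=
          mul_le_mul_of_nonneg_right hGt (le_of_lt het0)
      _ ≤ C * Real.exp (-β₂ * u) := by nlinarith
  have h2 : |G u * Real.exp (-β₂ * u)| ≤ C * Real.exp (-β₂ * u) := by
    rw [abs_mul, abs_of_pos heu]
    exact mul_le_mul_of_nonneg_right hGu (le_of_lt heu)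
  calc |G t * Real.exp (-β₂ * t) - G u * Real.exp (-β₂ * u)
        - ∫ x in u..t, G x * (Real.exp (-β₂ * x) * (-β₂))|
      ≤ |G t * Real.exp (-β₂ * t) - G u * Real.exp (-β₂ * u)|
        + |∫ x in u..t, G x * (Real.exp (-β₂ * x) * (-β₂))| := abs_sub _ _
    _ ≤ |G t * Real.exp (-β₂ * t)| + |G u * Real.exp (-β₂ * u)|
        + |∫ x in u..t, G x * (Real.exp (-β₂ * x) * (-β₂))| := by
        have := abs_sub (G t * Real.exp (-β₂ * t)) (G u * Real.exp (-β₂ * u))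
        linarith
    _ ≤ 3 * C * Real.exp (-β₂ * u) := by nlinarith

lemma jordan_int_bound {μ : Measure ℝ} [IsFiniteMeasure μ] {τ : ℝ}
    (hμ : μ (Set.Icc (-τ) 0)ᶜ = 0)
    {φ : ℝ → ℝ} (hφm : Measurable φ) {B Bloc : ℝ} (hBloc : 0 ≤ Bloc)
    (hφb : ∀ u, |φ u| ≤ B) (hloc : ∀ u ∈ Set.Icc (-τ) 0, |φ u| ≤ Bloc) :
    |∫ u, φ u ∂μ| ≤ Bloc * (μ Set.univ).toReal := by
  have hint : Integrable φ μ :=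
    (integrable_const B).mono' hφm.aestronglyMeasurable
      (Filter.Eventually.of_forall (fun u => by simpa using hφb u))
  have hcompl : ∫ u in (Set.Icc (-τ) 0)ᶜ, φ u ∂μ = 0 := by
    rw [Measure.restrict_eq_zero.mpr hμ]
    exact integral_zero_measure _
  have hsplit : ∫ u, φ u ∂μ = ∫ u in Set.Icc (-τ) 0, φ u ∂μ := by
    rw [← MeasureTheory.integral_add_compl measurableSet_Icc hint, hcompl, add_zero]
  rw [hsplit]
  have hb := MeasureTheory.norm_setIntegral_le_of_norm_le_const
    (μ := μ) (s := Set.Icc (-τ) 0) (f := φ) (C := Bloc)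
    (measure_lt_top μ _) (fun x hx => by simpa using hloc x hx)
  calc |∫ u in Set.Icc (-τ) 0, φ u ∂μ| ≤ Bloc * (μ (Set.Icc (-τ) 0)).toReal := hb
    _ ≤ Bloc * (μ Set.univ).toReal :=
        mul_le_mul_of_nonneg_left
          (ENNReal.toReal_mono (measure_ne_top μ _) (measure_mono (Set.subset_univ _))) hBloc

lemma sInt_g_bound (ν : MeasureTheory.SignedMeasure ℝ) {τ : ℝ}
    (hν : ν.totalVariation (Set.Icc (-τ) 0)ᶜ = 0)
    {r : ℝ → ℝ} (hrm : Measurable r) {K α : ℝ} (hK : 0 < K) (hα : 0 < α)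
    (h0 : ∀ t < (0:ℝ), r t = 0)
    (hrb : ∀ t ≥ (0:ℝ), |r t| ≤ K * Real.exp (-α * t)) :
    ∀ σ ≥ (0:ℝ), |sInt ν (fun u => r (σ + u))|
      ≤ ((ν.toJordanDecomposition.posPart Set.univ).toReal
         + (ν.toJordanDecomposition.negPart Set.univ).toReal)
        * (K * Real.exp (α * τ)) * Real.exp (-α * σ) := by
  intro σ hσ
  set μp := ν.toJordanDecomposition.posPart with hμpd
  set μn := ν.toJordanDecomposition.negPart with hμnd
  have hμp : μp (Set.Icc (-τ) 0)ᶜ = 0 := by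
    have : (μp + μn) (Set.Icc (-τ) 0)ᶜ = 0 := hν
    rw [Measure.add_apply] at this
    exact (add_eq_zero.1 this).1
  have hμn : μn (Set.Icc (-τ) 0)ᶜ = 0 := by
    have : (μp + μn) (Set.Icc (-τ) 0)ᶜ = 0 := hν
    rw [Measure.add_apply] at this
    exact (add_eq_zero.1 this).2
  have hrK : ∀ t, |r t| ≤ K := by
    intro t
    rcases lt_or_ge t 0 with h | h
    · rw [h0 t h]; simpa using le_of_lt hK
    · calc |r t| ≤ K * Real.exp (-α * t) := hrb t h
        _ ≤ K * 1 := by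
            refine mul_le_mul_of_nonneg_left ?_ (le_of_lt hK)
            exact Real.exp_le_one_iff.2 (by nlinarith)
        _ = K := mul_one K
  set Bloc := K * Real.exp (α * τ) * Real.exp (-α * σ) with hBloc
  have hBlocnn : 0 ≤ Bloc := by positivity
  have hφm : Measurable (fun u => r (σ + u)) := hrm.comp (measurable_const.add measurable_id)
  have hφb : ∀ u, |r (σ + u)| ≤ K := fun u => hrK _
  have hloc : ∀ u ∈ Set.Icc (-τ) 0, |r (σ + u)| ≤ Bloc := by
    intro u hu
    rcases lt_or_ge (σ + u) 0 with h | h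
    · rw [h0 _ h]; simpa using hBlocnn
    · calc |r (σ + u)| ≤ K * Real.exp (-α * (σ + u)) := hrb _ h
        _ ≤ Bloc := by
            rw [hBloc, mul_assoc, ← Real.exp_add]
            refine mul_le_mul_of_nonneg_left (Real.exp_le_exp.2 ?_) (le_of_lt hK)
            have := hu.1
            nlinarith
  have hp := jordan_int_bound hμp hφm hBlocnn hφb hloc
  have hn := jordan_int_bound hμn hφm hBlocnn hφb hloc
  have habs : |sInt ν (fun u => r (σ + u))|
      ≤ |∫ u, r (σ + u) ∂μp| + |∫ u, r (σ + u) ∂μn| := abs_sub _ _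
  calc |sInt ν (fun u => r (σ + u))|
      ≤ |∫ u, r (σ + u) ∂μp| + |∫ u, r (σ + u) ∂μn| := habs
    _ ≤ Bloc * (μp Set.univ).toReal + Bloc * (μn Set.univ).toReal := add_le_add hp hn
    _ = ((μp Set.univ).toReal + (μn Set.univ).toReal) * (K * Real.exp (α * τ))
        * Real.exp (-α * σ) := by rw [hBloc]; ring

set_option maxHeartbeats 1000000 in
/-- If the differential resolvent satisfies `|r(t)| ≤ K e^{-α t}` and the weighted primitive
`∫_0^t e^{β₂ s} f(s) ds` is uniformly bounded, then for every `ε ∈ (0,α)` there is `C' > 0`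
such that `|(r ∗ f)(t)| ≤ C' e^{-min(α-ε, β₂) t}` for all `t ≥ 0`. -/
theorem forced_solution_exp_decay_of_weighted_primitive_bounded
    (τ : ℝ) (hτ : 0 < τ) (ν : MeasureTheory.SignedMeasure ℝ)
    (hν : ν.totalVariation (Set.Icc (-τ) 0)ᶜ = 0)
    (r : ℝ → ℝ) (hr : IsResolvent ν r)
    (K α : ℝ) (hK : 0 < K) (hα : 0 < α)
    (hrb : ∀ t ≥ (0:ℝ), |r t| ≤ K * Real.exp (-α * t))
    (f : ℝ → ℝ) (hf : ContinuousOn f (Set.Ici (0:ℝ)))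
    (β₂ C : ℝ) (hβ₂ : 0 < β₂) (hC : 0 < C)
    (hfb : ∀ t ≥ (0:ℝ), |∫ s in (0:ℝ)..t, Real.exp (β₂ * s) * f s| ≤ C) :
    ∀ ε ∈ Set.Ioo (0:ℝ) α, ∃ C' > (0:ℝ), ∀ t ≥ (0:ℝ),
      |∫ s in (0:ℝ)..t, r (t - s) * f s| ≤ C' * Real.exp (-(min (α - ε) β₂) * t) := by
  obtain ⟨hr0, hrc, hreq⟩ := hr
  intro ε hε
  obtain ⟨hε0, hεα⟩ := hε
  have hrm : Measurable r := resolvent_measurable hr0 hrc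
  set μp := ν.toJordanDecomposition.posPart with hμpd
  set μn := ν.toJordanDecomposition.negPart with hμnd
  set M : ℝ := ((μp Set.univ).toReal + (μn Set.univ).toReal) * (K * Real.exp (α * τ)) with hM
  have hM0 : 0 ≤ M := by positivity
  set g : ℝ → ℝ := fun σ => sInt ν (fun u => r (σ + u)) with hgdef
  -- pointwise exponential bound on g for σ ≥ 0
  have hgb : ∀ σ ≥ (0:ℝ), |g σ| ≤ M * Real.exp (-α * σ) := by
    intro σ hσ
    exact sInt_g_bound ν hν hrm hK hα hr0 hrb σ hσ
  -- global bound on r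
  have hrK : ∀ x, |r x| ≤ K := by
    intro x
    rcases lt_or_ge x 0 with h | h
    · rw [hr0 x h]; simpa using le_of_lt hK
    · calc |r x| ≤ K * Real.exp (-α * x) := hrb x h
        _ ≤ K * 1 := mul_le_mul_of_nonneg_left
            (Real.exp_le_one_iff.2 (by nlinarith)) (le_of_lt hK)
        _ = K := mul_one K
  -- global bound on g
  set GK : ℝ := ((μp Set.univ).toReal + (μn Set.univ).toReal) * K with hGK
  have hGK0 : 0 ≤ GK := by positivity
  have hgK : ∀ σ, |g σ| ≤ GK := by
    intro σ
    have hφm : Measurable (fun u => r (σ + u)) := hrm.comp (measurable_const.add measurable_id)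
    have hμp : μp (Set.Icc (-τ) 0)ᶜ = 0 := by
      have : (μp + μn) (Set.Icc (-τ) 0)ᶜ = 0 := hν
      rw [Measure.add_apply] at this
      exact (add_eq_zero.1 this).1
    have hμn : μn (Set.Icc (-τ) 0)ᶜ = 0 := by
      have : (μp + μn) (Set.Icc (-τ) 0)ᶜ = 0 := hν
      rw [Measure.add_apply] at this
      exact (add_eq_zero.1 this).2
    have hp := jordan_int_bound hμp hφm (le_of_lt hK) (fun u => hrK _) (fun u _ => hrK _)
    have hn := jordan_int_bound hμn hφm (le_of_lt hK) (fun u => hrK _) (fun u _ => hrK _)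
    calc |g σ| ≤ |∫ u, r (σ + u) ∂μp| + |∫ u, r (σ + u) ∂μn| := abs_sub _ _
      _ ≤ K * (μp Set.univ).toReal + K * (μn Set.univ).toReal := add_le_add hp hn
      _ = GK := by rw [hGK]; ring
  -- measurability of g
  have hgm : Measurable g := by
    have h1 : StronglyMeasurable (fun p : ℝ × ℝ => r (p.1 + p.2)) :=
      (hrm.comp measurable_add).stronglyMeasurable
    have h2 := (h1.integral_prod_right' (ν := μp)).measurable
    have h3 := (h1.integral_prod_right' (ν := μn)).measurable
    exact h2.sub h3
  -- the resolvent identity, with g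
  have hreq' : ∀ x ≥ (0:ℝ), r x = 1 + ∫ σ in (0:ℝ)..x, g σ := hreq
  -- regularized forcing function
  set f₀ : ℝ → ℝ := fun s => f (max s 0) with hf₀def
  have hf₀c : Continuous f₀ :=
    hf.comp_continuous (continuous_id.max continuous_const) (fun x => Set.mem_Ici.2 (le_max_right _ _))
  have hG₀ : ∀ s ≥ (0:ℝ), |∫ σ in (0:ℝ)..s, Real.exp (β₂ * σ) * f₀ σ| ≤ C := by
    intro s hs
    have : ∫ σ in (0:ℝ)..s, Real.exp (β₂ * σ) * f₀ σ
        = ∫ σ in (0:ℝ)..s, Real.exp (β₂ * σ) * f σ := by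
      refine intervalIntegral.integral_congr (fun σ hσ => ?_)
      rw [uIcc_of_le hs] at hσ
      simp [hf₀def, max_eq_left hσ.1]
    rw [this]; exact hfb s hs
  have hD := tail_bound hf₀c hβ₂ hC hG₀
  -- constants
  set m : ℝ := min (α - ε) β₂ with hm
  have hmα : m ≤ α - ε := min_le_left _ _
  have hmβ : m ≤ β₂ := min_le_right _ _
  set c : ℝ := α - m with hc
  have hcε : ε ≤ c := by rw [hc]; linarith
  have hc0 : 0 < c := lt_of_lt_of_le hε0 hcε
  refine ⟨3 * C * K + 3 * C * M / ε, by positivity, ?_⟩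
  intro t ht
  set P : ℝ → ℝ := fun u => ∫ s in (0:ℝ)..u, f₀ s with hPdef
  have hPd : ∀ x : ℝ, HasDerivAt P (f₀ x) x := fun x =>
    intervalIntegral.integral_hasDerivAt_right (hf₀c.intervalIntegrable _ _)
      (hf₀c.stronglyMeasurable.stronglyMeasurableAtFilter) hf₀c.continuousAt
  have hPc : Continuous P := continuous_iff_continuousAt.2 (fun x => (hPd x).continuousAt)
  have hPsplit : ∀ u, P u = P t - ∫ s in u..t, f₀ s := by
    intro u
    have := intervalIntegral.integral_add_adjacent_intervals (μ := volume)
      (hf₀c.intervalIntegrable 0 u) (hf₀c.intervalIntegrable u t)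
    rw [hPdef]; simp only
    linarith [this]
  -- step 0 : replace f by f₀
  have step0 : ∫ s in (0:ℝ)..t, r (t - s) * f s = ∫ s in (0:ℝ)..t, r (t - s) * f₀ s := by
    refine intervalIntegral.integral_congr (fun s hs => ?_)
    rw [uIcc_of_le ht] at hs
    simp [hf₀def, max_eq_left hs.1]
  -- interval integrability helpers
  have hgtm : Measurable (fun u => g (t - u)) :=
    hgm.comp (measurable_const.sub measurable_id)
  have hgtb : ∀ u, |g (t - u)| ≤ GK := fun u => hgK _
  have hgtInt : IntervalIntegrable (fun u => g (t - u)) volume 0 t :=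
    boundedIntInt hgtm GK hgtb 0 t
  -- step 1 : the resolvent identity inside the integral
  have hres : ∀ s ∈ Set.uIcc (0:ℝ) t, r (t - s) - 1 = ∫ u in s..t, g (t - u) := by
    intro s hs
    rw [uIcc_of_le ht] at hs
    have hts : (0:ℝ) ≤ t - s := by linarith [hs.2]
    have h1 := hreq' (t - s) hts
    have h2 : ∫ u in s..t, g (t - u) = ∫ σ in (0:ℝ)..(t - s), g σ := by
      rw [intervalIntegral.integral_comp_sub_left g t, sub_self]
    rw [h2]
    linarith [h1]
  have split1 : ∫ s in (0:ℝ)..t, r (t - s) * f₀ s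
      = (∫ s in (0:ℝ)..t, f₀ s) + ∫ s in (0:ℝ)..t, f₀ s * (r (t - s) - 1) := by
    have hbase : IntervalIntegrable (fun s => r (t - s) - 1) volume 0 t := by
      refine boundedIntInt ((hrm.comp (measurable_const.sub measurable_id)).sub
        measurable_const) (K + 1) (fun x => ?_) 0 t
      calc |r (t - x) - 1| ≤ |r (t - x)| + |(1:ℝ)| := abs_sub _ _
        _ ≤ K + 1 := by simpa using add_le_add (hrK _) (le_refl (1:ℝ))
    have h2int : IntervalIntegrable (fun s => f₀ s * (r (t - s) - 1)) volume 0 t :=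
      hbase.continuousOn_mul hf₀c.continuousOn
    have hco : ∫ s in (0:ℝ)..t, r (t - s) * f₀ s
        = ∫ s in (0:ℝ)..t, (f₀ s + f₀ s * (r (t - s) - 1)) :=
      intervalIntegral.integral_congr (fun s _ => by ring)
    rw [hco, intervalIntegral.integral_add (hf₀c.intervalIntegrable 0 t) h2int]
  -- step 2 : Fubini
  have step2 : ∫ s in (0:ℝ)..t, f₀ s * (r (t - s) - 1)
      = ∫ u in (0:ℝ)..t, g (t - u) * P u := by
    have h1 : ∫ s in (0:ℝ)..t, f₀ s * (r (t - s) - 1)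
        = ∫ s in (0:ℝ)..t, f₀ s * ∫ u in s..t, g (t - u) :=
      intervalIntegral.integral_congr (fun s hs => by rw [hres s hs])
    rw [h1]
    exact fubini_triangle f₀ (fun u => g (t - u)) hf₀c hgtm GK hgtb t ht
  -- step 3 : decompose P u = P t - D u
  have step3 : ∫ u in (0:ℝ)..t, g (t - u) * P u
      = P t * (∫ u in (0:ℝ)..t, g (t - u))
        - ∫ u in (0:ℝ)..t, g (t - u) * (P t - P u) := by
    have hco : ∫ u in (0:ℝ)..t, g (t - u) * P u
        = ∫ u in (0:ℝ)..t, (P t * g (t - u) - g (t - u) * (P t - P u)) :=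
      intervalIntegral.integral_congr (fun u _ => by ring)
    have hi1 : IntervalIntegrable (fun u => P t * g (t - u)) volume 0 t :=
      hgtInt.const_mul (P t)
    have hi2 : IntervalIntegrable (fun u => g (t - u) * (P t - P u)) volume 0 t :=
      hgtInt.mul_continuousOn (Continuous.continuousOn (by fun_prop))
    rw [hco, intervalIntegral.integral_sub hi1 hi2, intervalIntegral.integral_const_mul]
  -- the integral of g over [0,t]
  have hgint : ∫ u in (0:ℝ)..t, g (t - u) = r t - 1 := by
    rw [intervalIntegral.integral_comp_sub_left g t, sub_self, sub_zero]
    have := hreq' t ht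
    linarith
  -- the final identity
  have main_id : ∫ s in (0:ℝ)..t, r (t - s) * f s
      = P t * r t - ∫ u in (0:ℝ)..t, g (t - u) * (P t - P u) := by
    rw [step0, split1, step2, step3, hgint]
    have : P t = ∫ s in (0:ℝ)..t, f₀ s := rfl
    rw [← this]; ring
  rw [main_id]
  -- bounds
  have hPt : |P t| ≤ 3 * C := by
    have := hD t ht 0 ⟨le_refl 0, ht⟩
    have h0t : ∫ s in (0:ℝ)..t, f₀ s = P t := rfl
    rw [h0t] at this
    simpa using this
  have hDb : ∀ u ∈ Set.Icc (0:ℝ) t, |P t - P u| ≤ 3 * C * Real.exp (-β₂ * u) := by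
    intro u hu
    have := hD t ht u hu
    have heq : P t - P u = ∫ s in u..t, f₀ s := by rw [hPsplit u]; ring
    rwa [heq]
  -- bound the remainder integral
  have hrem : |∫ u in (0:ℝ)..t, g (t - u) * (P t - P u)|
      ≤ 3 * C * M / ε * Real.exp (-m * t) := by
    set A : ℝ := 3 * C * M * Real.exp (-α * t) with hA
    have hA0 : 0 ≤ A := by positivity
    have hle := intervalIntegral.norm_integral_le_of_norm_le
      (f := fun u => g (t - u) * (P t - P u))
      (g := fun u => A * Real.exp (c * u)) (μ := volume) (a := 0) (b := t) ht ?_ ?_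
    · have hval : ∫ u in (0:ℝ)..t, A * Real.exp (c * u)
          = A / c * Real.exp (c * t) - A / c := by
        have hF : ∀ x : ℝ, HasDerivAt (fun y => A / c * Real.exp (c * y))
            (A * Real.exp (c * x)) x := by
          intro x
          have h1 := ((hasDerivAt_id x).const_mul c).exp
          have h2 := h1.const_mul (A / c)
          exact h2.congr_deriv (by field_simp; simp)
        rw [intervalIntegral.integral_eq_sub_of_hasDerivAt (fun x _ => hF x)
          ((by fun_prop : Continuous fun x : ℝ => A * Real.exp (c * x)).intervalIntegrable 0 t)]
        simp
      rw [hval] at hle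
      have hexp : Real.exp (-α * t) * Real.exp (c * t) = Real.exp (-m * t) := by
        rw [← Real.exp_add]; congr 1; rw [hc]; ring
      have hfinal : |A / c * Real.exp (c * t) - A / c|
          ≤ 3 * C * M / ε * Real.exp (-m * t) := by
        have h1 : (1:ℝ) ≤ Real.exp (c * t) := by
          rw [show (1:ℝ) = Real.exp 0 from (Real.exp_zero).symm]
          exact Real.exp_le_exp.2 (by positivity)
        have hnn : 0 ≤ A / c * Real.exp (c * t) - A / c := by
          have : A / c ≤ A / c * Real.exp (c * t) := by
            nlinarith [div_nonneg hA0 (le_of_lt hc0)]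
          linarith
        rw [abs_of_nonneg hnn]
        have h2 : A / c * Real.exp (c * t) - A / c ≤ A / c * Real.exp (c * t) := by
          have : 0 ≤ A / c := div_nonneg hA0 (le_of_lt hc0)
          linarith
        have h3 : A / c * Real.exp (c * t) = 3 * C * M / c * Real.exp (-m * t) := by
          rw [hA]
          rw [div_mul_eq_mul_div, div_mul_eq_mul_div]
          congr 1
          rw [mul_assoc, hexp]
        have h4 : 3 * C * M / c * Real.exp (-m * t) ≤ 3 * C * M / ε * Real.exp (-m * t) := by
          refine mul_le_mul_of_nonneg_right ?_ (le_of_lt (Real.exp_pos _))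
          exact div_le_div_of_nonneg_left (by positivity) hε0 hcε
        calc A / c * Real.exp (c * t) - A / c ≤ A / c * Real.exp (c * t) := h2
          _ = 3 * C * M / c * Real.exp (-m * t) := h3
          _ ≤ 3 * C * M / ε * Real.exp (-m * t) := h4
      exact le_trans hle (le_trans (le_abs_self _) hfinal)
    · refine (Filter.Eventually.of_forall fun u hu => ?_)
      have hu0 : (0:ℝ) ≤ u := le_of_lt hu.1
      have htu : (0:ℝ) ≤ t - u := by linarith [hu.2]
      have hg1 : |g (t - u)| ≤ M * Real.exp (-α * (t - u)) := hgb (t - u) htu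
      have hg2 : |P t - P u| ≤ 3 * C * Real.exp (-β₂ * u) := hDb u ⟨hu0, hu.2⟩
      have hmain : |g (t - u)| * |P t - P u|
          ≤ M * Real.exp (-α * (t - u)) * (3 * C * Real.exp (-β₂ * u)) :=
        mul_le_mul hg1 hg2 (abs_nonneg _) (by positivity)
      have hexpeq : M * Real.exp (-α * (t - u)) * (3 * C * Real.exp (-β₂ * u))
          = 3 * C * M * Real.exp (-α * t) * Real.exp ((α - β₂) * u) := by
        rw [mul_comm (M * Real.exp (-α * (t - u))) (3 * C * Real.exp (-β₂ * u))]
        rw [show (3 : ℝ) * C * Real.exp (-β₂ * u) * (M * Real.exp (-α * (t - u)))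
          = 3 * C * M * (Real.exp (-β₂ * u) * Real.exp (-α * (t - u))) from by ring]
        rw [show (3:ℝ) * C * M * Real.exp (-α * t) * Real.exp ((α - β₂) * u)
          = 3 * C * M * (Real.exp (-α * t) * Real.exp ((α - β₂) * u)) from by ring]
        congr 1
        rw [← Real.exp_add, ← Real.exp_add]
        congr 1
        ring
      have hmono : Real.exp ((α - β₂) * u) ≤ Real.exp (c * u) := by
        refine Real.exp_le_exp.2 ?_
        have : α - β₂ ≤ c := by rw [hc]; linarith
        nlinarith
      calc ‖g (t - u) * (P t - P u)‖ = |g (t - u)| * |P t - P u| := by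
            rw [Real.norm_eq_abs, abs_mul]
        _ ≤ 3 * C * M * Real.exp (-α * t) * Real.exp ((α - β₂) * u) := by
            rw [← hexpeq]; exact hmain
        _ ≤ A * Real.exp (c * u) := by
            rw [hA]
            exact mul_le_mul_of_nonneg_left hmono (by positivity)
    · exact (by fun_prop : Continuous fun x : ℝ => A * Real.exp (c * x)).intervalIntegrable 0 t
  -- assemble
  have hrt : |r t| ≤ K * Real.exp (-α * t) := hrb t ht
  have hP1 : |P t * r t| ≤ 3 * C * K * Real.exp (-m * t) := by
    rw [abs_mul]
    have h1 : |P t| * |r t| ≤ 3 * C * (K * Real.exp (-α * t)) :=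
      mul_le_mul hPt hrt (abs_nonneg _) (by positivity)
    have h2 : Real.exp (-α * t) ≤ Real.exp (-m * t) := by
      refine Real.exp_le_exp.2 ?_
      have : m ≤ α := by linarith
      nlinarith
    have h3 := mul_le_mul_of_nonneg_left h2 (by positivity : (0:ℝ) ≤ 3 * C * K)
    linarith [h1, h3]
  calc |P t * r t - ∫ u in (0:ℝ)..t, g (t - u) * (P t - P u)|
      ≤ |P t * r t| + |∫ u in (0:ℝ)..t, g (t - u) * (P t - P u)| := abs_sub _ _
    _ ≤ 3 * C * K * Real.exp (-m * t) + 3 * C * M / ε * Real.exp (-m * t) :=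
        add_le_add hP1 hrem
    _ = (3 * C * K + 3 * C * M / ε) * Real.exp (-(min (α - ε) β₂) * t) := by
        rw [hm]; ring
end

section
/- Let τ > 0, let ν be a finite signed Borel measure on [-τ,0], let r be the differential resolvent of ν, extended by r(t) = 0 for t < 0, and suppose |r(t)| ≤ K e^{-α t} for all t ≥ 0, where K > 0 and α > 0. Let f : [0,∞) → ℝ be continuous and suppose there exists C > 0 such that |(r ∗ f)(t)| ≤ C e^{-α t} for all t ≥ 0. Then for every β₂ ∈ (0, α) there exists B > 0 such that |∫_0^t e^{β₂ s} f(s) ds| ≤ B for all t ≥ 0. -/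
open MeasureTheory Filter Set

lemma finiteRestrictIoc (a b : ℝ) : IsFiniteMeasure (volume.restrict (Ioc a b)) := by
  constructor; rw [Measure.restrict_apply_univ, Real.volume_Ioc]; exact ENNReal.ofReal_lt_top

lemma integrableOn_Ioc_of_bounded {h : ℝ → ℝ} {a b D : ℝ}
    (hm : AEStronglyMeasurable h (volume.restrict (Ioc a b)))
    (hb : ∀ s ∈ Ioc a b, |h s| ≤ D) : IntegrableOn h (Ioc a b) := by
  haveI := finiteRestrictIoc a b
  refine ⟨hm, HasFiniteIntegral.of_bounded (C := D) ?_⟩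
  filter_upwards [ae_restrict_mem measurableSet_Ioc] with s hs
  simpa [Real.norm_eq_abs] using hb s hs

lemma measure_swap (a b : ℝ) (μ : Measure ℝ) [IsFiniteMeasure μ] (G : ℝ → ℝ → ℝ)
    (hm : StronglyMeasurable (fun p : ℝ × ℝ => G p.1 p.2))
    (D : ℝ) (hb : ∀ s ∈ Ioc a b, ∀ u, |G s u| ≤ D) :
    ∫ s in Ioc a b, (∫ u, G s u ∂μ) = ∫ u, (∫ s in Ioc a b, G s u) ∂μ := by
  haveI := finiteRestrictIoc a b
  refine integral_integral_swap ?_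
  refine ⟨hm.aestronglyMeasurable, HasFiniteIntegral.of_bounded (C := |D|) ?_⟩
  have hae : ∀ᵐ p ∂((volume.restrict (Ioc a b)).prod μ), p.1 ∈ Ioc a b := by
    rw [show μ = μ.restrict univ by rw [Measure.restrict_univ], Measure.prod_restrict]
    filter_upwards [ae_restrict_mem (measurableSet_Ioc.prod MeasurableSet.univ)] with p hp
    exact hp.1
  filter_upwards [hae] with p hp
  simpa [Real.norm_eq_abs, Function.uncurry] using (hb _ hp _).trans (le_abs_self D)

lemma triangle_swap (t : ℝ) (H : ℝ → ℝ → ℝ)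
    (hm : StronglyMeasurable (fun p : ℝ × ℝ => H p.1 p.2))
    (D : ℝ) (hb : ∀ s ∈ Ioc (0:ℝ) t, ∀ w ∈ Ioc (0:ℝ) t, |H s w| ≤ D) :
    ∫ s in Ioc (0:ℝ) t, (∫ w in Ioc s t, H s w) =
      ∫ w in Ioc (0:ℝ) t, (∫ s in Ioc (0:ℝ) w, H s w) := by
  haveI := finiteRestrictIoc (0:ℝ) t
  set Hi : ℝ × ℝ → ℝ := ({p : ℝ × ℝ | p.1 < p.2}).indicator (fun p => H p.1 p.2) with hHi
  have hmset : MeasurableSet {p : ℝ × ℝ | p.1 < p.2} := measurableSet_lt measurable_fst measurable_snd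
  have hmi : StronglyMeasurable Hi := hm.indicator hmset
  have hival : ∀ s w : ℝ, Hi (s, w) = if s < w then H s w else 0 := by
    intro s w
    by_cases h : s < w <;> simp [hHi, Set.indicator_apply, h]
  -- slices are strongly measurable
  have hslice1 : ∀ s : ℝ, StronglyMeasurable (fun w => Hi (s, w)) :=
    fun s => hmi.comp_measurable (measurable_const.prodMk measurable_id)
  have hslice2 : ∀ w : ℝ, StronglyMeasurable (fun s => Hi (s, w)) :=
    fun w => hmi.comp_measurable (measurable_id.prodMk measurable_const)
  have hibd : ∀ p : ℝ × ℝ, p.1 ∈ Ioc (0:ℝ) t → p.2 ∈ Ioc (0:ℝ) t → |Hi p| ≤ |D| := by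
    rintro ⟨s, w⟩ h1 h2
    rw [hival]
    split
    · exact (hb s h1 w h2).trans (le_abs_self D)
    · simpa using abs_nonneg D
  have hint : Integrable (Function.uncurry (fun s w => Hi (s, w)))
      ((volume.restrict (Ioc (0:ℝ) t)).prod (volume.restrict (Ioc (0:ℝ) t))) := by
    refine ⟨(hmi.comp_measurable measurable_id).aestronglyMeasurable, HasFiniteIntegral.of_bounded (C := |D|) ?_⟩
    rw [Measure.prod_restrict]
    filter_upwards [ae_restrict_mem (measurableSet_Ioc.prod measurableSet_Ioc)] with p hp
    simpa [Real.norm_eq_abs, Function.uncurry] using hibd p hp.1 hp.2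
  have swap := integral_integral_swap hint
  calc ∫ s in Ioc (0:ℝ) t, (∫ w in Ioc s t, H s w)
      = ∫ s in Ioc (0:ℝ) t, (∫ w in Ioc (0:ℝ) t, Hi (s, w)) := by
        refine setIntegral_congr_fun measurableSet_Ioc (fun s hs => ?_)
        have hsplit : Ioc (0:ℝ) t = Ioc 0 s ∪ Ioc s t := (Ioc_union_Ioc_eq_Ioc hs.1.le hs.2).symm
        have hi1 : IntegrableOn (fun w => Hi (s, w)) (Ioc 0 s) :=
          integrableOn_Ioc_of_bounded (D := |D|) (hslice1 s).aestronglyMeasurable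
            (fun w hw => by rw [hival, if_neg (not_lt.mpr hw.2)]; simpa using abs_nonneg D)
        have hi2 : IntegrableOn (fun w => Hi (s, w)) (Ioc s t) :=
          integrableOn_Ioc_of_bounded (D := |D|) (hslice1 s).aestronglyMeasurable
            (fun w hw => hibd (s, w) hs ⟨hs.1.trans hw.1, hw.2⟩)
        rw [hsplit, setIntegral_union (Ioc_disjoint_Ioc_of_le le_rfl) measurableSet_Ioc hi1 hi2]
        have e1 : ∫ w in Ioc (0:ℝ) s, Hi (s, w) = 0 := by
          rw [setIntegral_congr_fun measurableSet_Ioc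
            (fun w hw => by rw [hival, if_neg (not_lt.mpr hw.2)])]
          simp
        have e2 : ∫ w in Ioc s t, Hi (s, w) = ∫ w in Ioc s t, H s w :=
          setIntegral_congr_fun measurableSet_Ioc (fun w hw => by rw [hival, if_pos hw.1])
        rw [e1, e2, zero_add]
    _ = ∫ w in Ioc (0:ℝ) t, (∫ s in Ioc (0:ℝ) t, Hi (s, w)) := swap
    _ = ∫ w in Ioc (0:ℝ) t, (∫ s in Ioc (0:ℝ) w, H s w) := by
        refine setIntegral_congr_fun measurableSet_Ioc (fun w hw => ?_)
        have hsplit : Ioc (0:ℝ) t = Ioc 0 w ∪ Ioc w t := (Ioc_union_Ioc_eq_Ioc hw.1.le hw.2).symm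
        have hi1 : IntegrableOn (fun s => Hi (s, w)) (Ioc 0 w) :=
          integrableOn_Ioc_of_bounded (D := |D|) (hslice2 w).aestronglyMeasurable
            (fun s hs => hibd (s, w) ⟨hs.1, hs.2.trans hw.2⟩ hw)
        have hi2 : IntegrableOn (fun s => Hi (s, w)) (Ioc w t) :=
          integrableOn_Ioc_of_bounded (D := |D|) (hslice2 w).aestronglyMeasurable
            (fun s hs => by rw [hival, if_neg (not_lt.mpr hs.1.le)]; simpa using abs_nonneg D)
        rw [hsplit, setIntegral_union (Ioc_disjoint_Ioc_of_le le_rfl) measurableSet_Ioc hi1 hi2]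
        have e2 : ∫ s in Ioc w t, Hi (s, w) = 0 := by
          rw [setIntegral_congr_fun measurableSet_Ioc
            (fun s hs => by rw [hival, if_neg (not_lt.mpr hs.1.le)])]
          simp
        have e1 : ∫ s in Ioc (0:ℝ) w, Hi (s, w) = ∫ s in Ioc (0:ℝ) w, H s w := by
          refine setIntegral_congr_ae measurableSet_Ioc ?_
          have hne : ∀ᵐ s : ℝ, s ≠ w := by
            refine MeasureTheory.ae_iff.mpr ?_; simpa using measure_singleton w
          filter_upwards [hne] with s hsne hs
          rw [hival, if_pos (lt_of_le_of_ne hs.2 hsne)]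
        rw [e1, e2, add_zero]

set_option maxHeartbeats 3000000 in
/-- If the differential resolvent satisfies `|r(t)| ≤ K e^{-α t}` and the forced solution
satisfies `|(r ∗ f)(t)| ≤ C e^{-α t}`, then for every `β₂ ∈ (0,α)` there is `B > 0` such
that `|∫_0^t e^{β₂ s} f(s) ds| ≤ B` for all `t ≥ 0`. -/
theorem weighted_primitive_bounded_of_forced_solution_exp_decay
    (τ : ℝ) (hτ : 0 < τ) (ν : MeasureTheory.SignedMeasure ℝ)
    (hν : ν.totalVariation (Set.Icc (-τ) 0)ᶜ = 0)
    (r : ℝ → ℝ) (hr : IsResolvent ν r)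
    (K α : ℝ) (hK : 0 < K) (hα : 0 < α)
    (hrb : ∀ t ≥ (0:ℝ), |r t| ≤ K * Real.exp (-α * t))
    (f : ℝ → ℝ) (hf : ContinuousOn f (Set.Ici (0:ℝ)))
    (C : ℝ) (hC : 0 < C)
    (hconv : ∀ t ≥ (0:ℝ), |∫ s in (0:ℝ)..t, r (t - s) * f s| ≤ C * Real.exp (-α * t)) :
    ∀ β₂ ∈ Set.Ioo (0:ℝ) α, ∃ B > (0:ℝ), ∀ t ≥ (0:ℝ),
      |∫ s in (0:ℝ)..t, Real.exp (β₂ * s) * f s| ≤ B := by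
  obtain ⟨hr0, hrc, hres⟩ := hr
  intro β hβ
  obtain ⟨hβ0, hβα⟩ := hβ
  have hαβ : 0 < α - β := sub_pos.mpr hβα
  -- Jordan decomposition
  set μP := ν.toJordanDecomposition.posPart with hμP
  set μN := ν.toJordanDecomposition.negPart with hμN
  have hsInt : ∀ h : ℝ → ℝ, sInt ν h = (∫ u, h u ∂μP) - ∫ u, h u ∂μN := fun h => by
    simp only [sInt, hμP, hμN]
  have htv : μP (Icc (-τ) 0)ᶜ + μN (Icc (-τ) 0)ᶜ = 0 := by
    have h2 : ν.totalVariation (Icc (-τ) 0)ᶜ = μP (Icc (-τ) 0)ᶜ + μN (Icc (-τ) 0)ᶜ := by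
      rw [MeasureTheory.SignedMeasure.totalVariation, hμP, hμN]; rfl
    rw [← h2, hν]
  have hsupP : μP (Icc (-τ) 0)ᶜ = 0 := (add_eq_zero.mp htv).1
  have hsupN : μN (Icc (-τ) 0)ᶜ = 0 := (add_eq_zero.mp htv).2
  have haeP : ∀ᵐ u ∂μP, u ∈ Icc (-τ) 0 := by rw [ae_iff]; exact hsupP
  have haeN : ∀ᵐ u ∂μN, u ∈ Icc (-τ) 0 := by rw [ae_iff]; exact hsupN
  set MP := (μP univ).toReal with hMP
  set MN := (μN univ).toReal with hMN
  have hMP0 : 0 ≤ MP := ENNReal.toReal_nonneg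
  have hMN0 : 0 ≤ MN := ENNReal.toReal_nonneg
  -- continuous modification of f
  set F : ℝ → ℝ := fun s => f (max s 0) with hFdef
  have hFc : Continuous F := hf.comp_continuous (continuous_id.max continuous_const)
      (fun x => mem_Ici.mpr (le_max_right x 0))
  have hFeq : ∀ s, 0 ≤ s → F s = f s := fun s hs => by
    simp only [hFdef]; rw [max_eq_left hs]
  -- measurability of r
  have hrmax : Continuous (fun v => r (max v 0)) := hrc.comp_continuous
      (continuous_id.max continuous_const) (fun x => mem_Ici.mpr (le_max_right x 0))
  have hrm : Measurable r := by
    have : r = fun v => (Ici (0:ℝ)).indicator (fun w => r (max w 0)) v := by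
      funext v
      by_cases hv : (0:ℝ) ≤ v
      · rw [indicator_of_mem (mem_Ici.mpr hv), max_eq_left hv]
      · rw [indicator_of_notMem (by simpa using hv), hr0 v (lt_of_not_ge hv)]
    rw [this]
    exact hrmax.measurable.indicator measurableSet_Ici
  have hrK : ∀ v, |r v| ≤ K := by
    intro v
    rcases le_or_gt 0 v with hv | hv
    · refine (hrb v hv).trans ?_
      have h1 : Real.exp (-α * v) ≤ 1 := Real.exp_le_one_iff.mpr (by nlinarith)
      nlinarith
    · rw [hr0 v hv]; simpa using hK.le
  -- the kernel q
  set q : ℝ → ℝ := fun σ => (∫ u, r (σ + u) ∂μP) - ∫ u, r (σ + u) ∂μN with hqdef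
  have hres' : ∀ v, 0 ≤ v → r v = 1 + ∫ σ in (0:ℝ)..v, q σ := fun v hv => hres v hv
  have hrp : StronglyMeasurable (fun p : ℝ × ℝ => r (p.1 + p.2)) :=
    (hrm.comp (measurable_fst.add measurable_snd)).stronglyMeasurable
  have hqm : StronglyMeasurable q :=
    (hrp.integral_prod_right' (ν := μP)).sub (hrp.integral_prod_right' (ν := μN))
  have habs2 : ∀ a b : ℝ, |a - b| ≤ |a| + |b| := fun a b => by
    rw [sub_eq_add_neg]; exact (abs_add_le _ _).trans (by rw [abs_neg])
  have hqb : ∀ σ, |q σ| ≤ K * (MP + MN) := by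
    intro σ
    have b1 : |∫ u, r (σ + u) ∂μP| ≤ K * MP := by
      rw [hMP]
      simpa [Real.norm_eq_abs, Measure.real] using
        norm_integral_le_of_norm_le_const (μ := μP) (f := fun u => r (σ + u)) (C := K)
          (Filter.Eventually.of_forall (fun u => by simpa [Real.norm_eq_abs] using hrK (σ + u)))
    have b2 : |∫ u, r (σ + u) ∂μN| ≤ K * MN := by
      rw [hMN]
      simpa [Real.norm_eq_abs, Measure.real] using
        norm_integral_le_of_norm_le_const (μ := μN) (f := fun u => r (σ + u)) (C := K)
          (Filter.Eventually.of_forall (fun u => by simpa [Real.norm_eq_abs] using hrK (σ + u)))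
    have := habs2 (∫ u, r (σ + u) ∂μP) (∫ u, r (σ + u) ∂μN)
    simp only [hqdef]
    nlinarith
  have hqi : ∀ a b : ℝ, IntervalIntegrable q volume a b := by
    intro a b
    rw [intervalIntegrable_iff]
    exact integrableOn_Ioc_of_bounded (D := K * (MP + MN)) hqm.aestronglyMeasurable
      (fun s _ => hqb s)
  have hQc : Continuous (fun y => ∫ σ in (0:ℝ)..y, q σ) :=
    intervalIntegral.continuous_primitive hqi 0
  -- the forced solution x
  set x : ℝ → ℝ := fun v => ∫ s in (0:ℝ)..v, r (v - s) * F s with hxdef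
  have hxzero : ∀ v, v ≤ 0 → x v = 0 := by
    intro v hv
    rcases eq_or_lt_of_le hv with h | h
    · simp only [hxdef]; rw [h, intervalIntegral.integral_same]
    · simp only [hxdef]
      rw [intervalIntegral.integral_symm v 0, intervalIntegral.integral_of_le hv]
      rw [setIntegral_congr_fun measurableSet_Ioc (g := fun _ => (0:ℝ))
        (fun s hs => by rw [hr0 (v - s) (by linarith [hs.1]), zero_mul])]
      simp
  have hxm : StronglyMeasurable x := by
    have hset : MeasurableSet {p : ℝ × ℝ | p.2 ∈ Ioc 0 p.1} := by
      have he : {p : ℝ × ℝ | p.2 ∈ Ioc 0 p.1}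
          = {p : ℝ × ℝ | (0:ℝ) < p.2} ∩ {p : ℝ × ℝ | p.2 ≤ p.1} := by
        ext p; simp [mem_Ioc]
      rw [he]
      exact (measurableSet_lt measurable_const measurable_snd).inter
        (measurableSet_le measurable_snd measurable_fst)
    have hJ : StronglyMeasurable (fun p : ℝ × ℝ =>
        ({p : ℝ × ℝ | p.2 ∈ Ioc 0 p.1}).indicator (fun p => r (p.1 - p.2) * F p.2) p) :=
      (((hrm.comp (measurable_fst.sub measurable_snd)).mul
        (hFc.measurable.comp measurable_snd)).stronglyMeasurable).indicator hset
    have hrep := hJ.integral_prod_right' (ν := (volume : Measure ℝ))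
    have hxeq : x = fun v => ∫ s, ({p : ℝ × ℝ | p.2 ∈ Ioc 0 p.1}).indicator
        (fun p => r (p.1 - p.2) * F p.2) (v, s) := by
      funext v
      rcases le_or_gt v 0 with hv | hv
      · rw [hxzero v hv]
        symm
        have hz : ∀ s : ℝ, ({p : ℝ × ℝ | p.2 ∈ Ioc 0 p.1}).indicator
            (fun p => r (p.1 - p.2) * F p.2) (v, s) = 0 := by
          intro s
          apply indicator_of_notMem
          simp only [mem_setOf_eq, mem_Ioc, not_and]
          intro h1; linarith
        simp only [hz]
        exact integral_zero ℝ ℝ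
      · simp only [hxdef]
        rw [intervalIntegral.integral_of_le hv.le, ← integral_indicator measurableSet_Ioc]
        congr 1
    rw [hxeq]; exact hrep
  have hxb : ∀ v, 0 ≤ v → |x v| ≤ C * Real.exp (-α * v) := by
    intro v hv
    have he : x v = ∫ s in (0:ℝ)..v, r (v - s) * f s := by
      simp only [hxdef]
      refine intervalIntegral.integral_congr (fun s hs => ?_)
      rw [uIcc_of_le hv] at hs
      rw [hFeq s hs.1]
    rw [he]; exact hconv v hv
  have hxC : ∀ v, |x v| ≤ C := by
    intro v
    rcases le_or_gt v 0 with hv | hv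
    · rw [hxzero v hv]; simpa using hC.le
    · refine (hxb v hv.le).trans ?_
      have h1 : Real.exp (-α * v) ≤ 1 := Real.exp_le_one_iff.mpr (by nlinarith)
      nlinarith
  -- the function g
  set g : ℝ → ℝ := fun w => (∫ u, x (w + u) ∂μP) - ∫ u, x (w + u) ∂μN with hgdef
  have hxp : StronglyMeasurable (fun p : ℝ × ℝ => x (p.1 + p.2)) :=
    hxm.comp_measurable (measurable_fst.add measurable_snd)
  have hgm : StronglyMeasurable g :=
    (hxp.integral_prod_right' (ν := μP)).sub (hxp.integral_prod_right' (ν := μN))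
  have hgb : ∀ w, |g w| ≤ (MP + MN) * C := by
    intro w
    have b1 : |∫ u, x (w + u) ∂μP| ≤ C * MP := by
      rw [hMP]
      simpa [Real.norm_eq_abs, Measure.real] using
        norm_integral_le_of_norm_le_const (μ := μP) (f := fun u => x (w + u)) (C := C)
          (Filter.Eventually.of_forall (fun u => by simpa [Real.norm_eq_abs] using hxC (w + u)))
    have b2 : |∫ u, x (w + u) ∂μN| ≤ C * MN := by
      rw [hMN]
      simpa [Real.norm_eq_abs, Measure.real] using
        norm_integral_le_of_norm_le_const (μ := μN) (f := fun u => x (w + u)) (C := C)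
          (Filter.Eventually.of_forall (fun u => by simpa [Real.norm_eq_abs] using hxC (w + u)))
    have := habs2 (∫ u, x (w + u) ∂μP) (∫ u, x (w + u) ∂μN)
    simp only [hgdef]
    nlinarith
  have hgb' : ∀ w, 0 ≤ w → |g w| ≤ (MP + MN) * (C * Real.exp (α * τ)) * Real.exp (-α * w) := by
    intro w hw
    have hb : ∀ u ∈ Icc (-τ) (0:ℝ), |x (w + u)| ≤ C * Real.exp (α * τ) * Real.exp (-α * w) := by
      intro u hu
      rcases le_or_gt (w + u) 0 with h0 | h0
      · rw [hxzero _ h0]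
        simpa using (by positivity : (0:ℝ) ≤ C * Real.exp (α * τ) * Real.exp (-α * w))
      · refine (hxb _ h0.le).trans ?_
        rw [mul_assoc, ← Real.exp_add]
        exact mul_le_mul_of_nonneg_left (Real.exp_le_exp.mpr (by nlinarith [hu.1])) hC.le
    have b1 : |∫ u, x (w + u) ∂μP| ≤ C * Real.exp (α * τ) * Real.exp (-α * w) * MP := by
      rw [hMP]
      simpa [Real.norm_eq_abs, Measure.real] using
        norm_integral_le_of_norm_le_const (μ := μP) (f := fun u => x (w + u))
          (C := C * Real.exp (α * τ) * Real.exp (-α * w))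
          (by filter_upwards [haeP] with u hu; simpa [Real.norm_eq_abs] using hb u hu)
    have b2 : |∫ u, x (w + u) ∂μN| ≤ C * Real.exp (α * τ) * Real.exp (-α * w) * MN := by
      rw [hMN]
      simpa [Real.norm_eq_abs, Measure.real] using
        norm_integral_le_of_norm_le_const (μ := μN) (f := fun u => x (w + u))
          (C := C * Real.exp (α * τ) * Real.exp (-α * w))
          (by filter_upwards [haeN] with u hu; simpa [Real.norm_eq_abs] using hb u hu)
    have := habs2 (∫ u, x (w + u) ∂μP) (∫ u, x (w + u) ∂μN)
    simp only [hgdef]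
    nlinarith
  -- main identity
  have hmain : ∀ t, 0 ≤ t → x t = (∫ s in Ioc (0:ℝ) t, F s) + ∫ w in Ioc (0:ℝ) t, g w := by
    intro t ht
    obtain ⟨MF, hMF⟩ := (isCompact_Icc (a := (0:ℝ)) (b := t)).exists_bound_of_continuousOn
      hFc.continuousOn
    have hMF' : ∀ s ∈ Icc (0:ℝ) t, |F s| ≤ MF := fun s hs => by
      simpa [Real.norm_eq_abs] using hMF s hs
    have hMF0 : 0 ≤ MF := le_trans (abs_nonneg _) (hMF' 0 ⟨le_refl _, ht⟩)
    have h3 : ∀ s ∈ Ioc (0:ℝ) t, (∫ w in Ioc s t, q (w - s)) = ∫ σ in (0:ℝ)..(t - s), q σ := by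
      intro s hs
      calc ∫ w in Ioc s t, q (w - s) = ∫ w in s..t, q (w - s) :=
            (intervalIntegral.integral_of_le hs.2).symm
        _ = ∫ w in (s - s)..(t - s), q w := intervalIntegral.integral_comp_sub_right q s
        _ = ∫ σ in (0:ℝ)..(t - s), q σ := by rw [sub_self]
    have e2 : ∀ s ∈ Ioc (0:ℝ) t, r (t - s) * F s
        = F s + (∫ w in Ioc s t, q (w - s)) * F s := by
      intro s hs
      rw [hres' (t - s) (by linarith [hs.2]), h3 s hs]; ring
    have e1 : x t = ∫ s in Ioc (0:ℝ) t, (F s + (∫ w in Ioc s t, q (w - s)) * F s) := by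
      simp only [hxdef]
      rw [intervalIntegral.integral_of_le ht]
      exact setIntegral_congr_fun measurableSet_Ioc e2
    have hiF : IntegrableOn F (Ioc (0:ℝ) t) := hFc.integrableOn_Ioc
    have hi2 : IntegrableOn (fun s => (∫ w in Ioc s t, q (w - s)) * F s) (Ioc (0:ℝ) t) := by
      have hcont : Continuous (fun s => (∫ σ in (0:ℝ)..(t - s), q σ) * F s) :=
        (hQc.comp (continuous_const.sub continuous_id)).mul hFc
      refine IntegrableOn.congr_fun hcont.integrableOn_Ioc (fun s hs => ?_) measurableSet_Ioc
      rw [h3 s hs]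
    have e4 : x t = (∫ s in Ioc (0:ℝ) t, F s)
        + ∫ s in Ioc (0:ℝ) t, (∫ w in Ioc s t, q (w - s)) * F s := by
      rw [e1]; exact integral_add hiF hi2
    have e5 : ∫ s in Ioc (0:ℝ) t, (∫ w in Ioc s t, q (w - s)) * F s
        = ∫ s in Ioc (0:ℝ) t, ∫ w in Ioc s t, q (w - s) * F s :=
      setIntegral_congr_fun measurableSet_Ioc
        (fun s _ => (integral_mul_const (F s) (fun w => q (w - s))).symm)
    have hKM0 : 0 ≤ K * (MP + MN) := mul_nonneg hK.le (add_nonneg hMP0 hMN0)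
    have hswap := triangle_swap t (fun s w => q (w - s) * F s)
      ((hqm.comp_measurable (measurable_snd.sub measurable_fst)).mul
        (hFc.measurable.comp measurable_fst).stronglyMeasurable)
      (K * (MP + MN) * MF)
      (fun s hs w hw => by
        rw [abs_mul]
        exact mul_le_mul (hqb _) (hMF' s ⟨hs.1.le, hs.2⟩) (abs_nonneg _) hKM0)
    have e6 : ∀ w ∈ Ioc (0:ℝ) t, (∫ s in Ioc (0:ℝ) w, q (w - s) * F s) = g w := by
      intro w hw
      have hIccsub : Ioc (0:ℝ) w ⊆ Icc (0:ℝ) t := fun s hs => ⟨hs.1.le, hs.2.trans hw.2⟩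
      have hbRF : ∀ (c : ℝ) (s : ℝ), s ∈ Icc (0:ℝ) t → |r c * F s| ≤ K * MF := fun c s hs => by
        rw [abs_mul]; exact mul_le_mul (hrK c) (hMF' s hs) (abs_nonneg _) hK.le
      have eq1 : ∀ s ∈ Ioc (0:ℝ) w, q (w - s) * F s
          = (∫ u, r ((w - s) + u) * F s ∂μP) - ∫ u, r ((w - s) + u) * F s ∂μN := by
        intro s hs
        simp only [hqdef]
        rw [sub_mul, ← integral_mul_const, ← integral_mul_const]
      rw [setIntegral_congr_fun measurableSet_Ioc eq1]
      have hsm2 : StronglyMeasurable (fun p : ℝ × ℝ => r ((w - p.1) + p.2) * F p.1) :=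
        ((hrm.comp ((measurable_const.sub measurable_fst).add measurable_snd)).mul
          (hFc.measurable.comp measurable_fst)).stronglyMeasurable
      have hiP : IntegrableOn (fun s => ∫ u, r ((w - s) + u) * F s ∂μP) (Ioc (0:ℝ) w) := by
        refine integrableOn_Ioc_of_bounded (D := K * MF * MP)
          (hsm2.integral_prod_right' (ν := μP)).aestronglyMeasurable (fun s hs => ?_)
        have h := norm_integral_le_of_norm_le_const (μ := μP)
          (f := fun u => r ((w - s) + u) * F s) (C := K * MF)
          (Filter.Eventually.of_forall (fun u => by
            rw [Real.norm_eq_abs]; exact hbRF ((w - s) + u) s (hIccsub hs)))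
        rw [show K * MF * MP = K * MF * (μP univ).toReal by rw [hMP]]
        rw [Real.norm_eq_abs] at h
        exact h
      have hiN : IntegrableOn (fun s => ∫ u, r ((w - s) + u) * F s ∂μN) (Ioc (0:ℝ) w) := by
        refine integrableOn_Ioc_of_bounded (D := K * MF * MN)
          (hsm2.integral_prod_right' (ν := μN)).aestronglyMeasurable (fun s hs => ?_)
        have h := norm_integral_le_of_norm_le_const (μ := μN)
          (f := fun u => r ((w - s) + u) * F s) (C := K * MF)
          (Filter.Eventually.of_forall (fun u => by
            rw [Real.norm_eq_abs]; exact hbRF ((w - s) + u) s (hIccsub hs)))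
        rw [show K * MF * MN = K * MF * (μN univ).toReal by rw [hMN]]
        rw [Real.norm_eq_abs] at h
        exact h
      rw [integral_sub hiP hiN]
      rw [measure_swap 0 w μP _ hsm2 (K * MF) (fun s hs u => hbRF _ s (hIccsub hs)),
          measure_swap 0 w μN _ hsm2 (K * MF) (fun s hs u => hbRF _ s (hIccsub hs))]
      have hsl : ∀ u : ℝ, StronglyMeasurable (fun s => r ((w - s) + u) * F s) := fun u =>
        hsm2.comp_measurable (measurable_id.prodMk measurable_const)
      have key : ∀ u, u ≤ 0 → (∫ s in Ioc (0:ℝ) w, r ((w - s) + u) * F s) = x (w + u) := by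
        intro u hu
        rcases le_or_gt (w + u) 0 with h0 | h0
        · rw [hxzero _ h0]
          rw [setIntegral_congr_fun measurableSet_Ioc (g := fun _ => (0:ℝ))
            (fun s hs => by rw [hr0 ((w - s) + u) (by linarith [hs.1]), zero_mul])]
          try simp
        · have hle : w + u ≤ w := by linarith
          have hsplit : Ioc (0:ℝ) w = Ioc 0 (w + u) ∪ Ioc (w + u) w :=
            (Ioc_union_Ioc_eq_Ioc h0.le hle).symm
          have hi1 : IntegrableOn (fun s => r ((w - s) + u) * F s) (Ioc (0:ℝ) (w + u)) :=
            integrableOn_Ioc_of_bounded (D := K * MF) (hsl u).aestronglyMeasurable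
              (fun s hs => hbRF _ s ⟨hs.1.le, le_trans (le_trans hs.2 hle) hw.2⟩)
          have hi2' : IntegrableOn (fun s => r ((w - s) + u) * F s) (Ioc (w + u) w) :=
            integrableOn_Ioc_of_bounded (D := K * MF) (hsl u).aestronglyMeasurable
              (fun s hs => hbRF _ s ⟨le_trans h0.le hs.1.le, hs.2.trans hw.2⟩)
          rw [hsplit, setIntegral_union (Ioc_disjoint_Ioc_of_le le_rfl) measurableSet_Ioc hi1 hi2']
          have z2 : ∫ s in Ioc (w + u) w, r ((w - s) + u) * F s = 0 := by
            rw [setIntegral_congr_fun measurableSet_Ioc (g := fun _ => (0:ℝ))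
              (fun s hs => by rw [hr0 ((w - s) + u) (by linarith [hs.1]), zero_mul])]
            try simp
          rw [z2, add_zero]
          simp only [hxdef]
          rw [intervalIntegral.integral_of_le h0.le]
          exact setIntegral_congr_fun measurableSet_Ioc
            (fun s hs => by rw [show (w - s) + u = (w + u) - s by ring])
      have cP : ∫ u, (∫ s in Ioc (0:ℝ) w, r ((w - s) + u) * F s) ∂μP = ∫ u, x (w + u) ∂μP :=
        integral_congr_ae (by filter_upwards [haeP] with u hu using key u hu.2)
      have cN : ∫ u, (∫ s in Ioc (0:ℝ) w, r ((w - s) + u) * F s) ∂μN = ∫ u, x (w + u) ∂μN :=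
        integral_congr_ae (by filter_upwards [haeN] with u hu using key u hu.2)
      rw [cP, cN]
      try simp only [hgdef]
    rw [e4, e5, hswap]
    congr 1
    exact setIntegral_congr_fun measurableSet_Ioc e6
  -- integrability of g and F + g
  have hgint : ∀ t : ℝ, IntegrableOn g (Ioc (0:ℝ) t) := fun t =>
    integrableOn_Ioc_of_bounded (D := (MP + MN) * C) hgm.aestronglyMeasurable (fun s _ => hgb s)
  -- exponential integrals
  have hexp1 : ∀ c : ℝ, c ≠ 0 → ∀ a b2 : ℝ, a ≤ b2 →
      ∫ s in Ioc a b2, Real.exp (c * s) = (Real.exp (c * b2) - Real.exp (c * a)) / c := by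
    intro c hc a b2 hab
    rw [← intervalIntegral.integral_of_le hab,
      intervalIntegral.integral_comp_mul_left (fun u => Real.exp u) hc,
      integral_exp, smul_eq_mul, div_eq_inv_mul]
  -- integration by parts identity
  have hibp : ∀ t, 0 ≤ t →
      ∫ s in Ioc (0:ℝ) t, Real.exp (β * s) * F s
        = Real.exp (β * t) * x t - β * (∫ s in Ioc (0:ℝ) t, Real.exp (β * s) * x s)
          - ∫ s in Ioc (0:ℝ) t, Real.exp (β * s) * g s := by
    intro t ht
    obtain ⟨MF, hMF⟩ := (isCompact_Icc (a := (0:ℝ)) (b := t)).exists_bound_of_continuousOn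
      hFc.continuousOn
    have hMF' : ∀ s ∈ Icc (0:ℝ) t, |F s| ≤ MF := fun s hs => by
      simpa [Real.norm_eq_abs] using hMF s hs
    have hMF0 : 0 ≤ MF := le_trans (abs_nonneg _) (hMF' 0 ⟨le_refl _, ht⟩)
    have h1 : ∫ s in Ioc (0:ℝ) t, Real.exp (β * s) * x s
        = ∫ s in Ioc (0:ℝ) t, ∫ w in Ioc (0:ℝ) s, Real.exp (β * s) * (F w + g w) := by
      refine setIntegral_congr_fun measurableSet_Ioc (fun s hs => ?_)
      rw [hmain s hs.1.le, ← integral_add hFc.integrableOn_Ioc (hgint s)]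
      exact (integral_const_mul _ _).symm
    have hswap2 := triangle_swap t (fun a b => Real.exp (β * b) * (F a + g a))
      (((Real.measurable_exp.comp (measurable_const.mul measurable_snd)).stronglyMeasurable).mul
        ((hFc.measurable.comp measurable_fst).stronglyMeasurable.add
          (hgm.comp_measurable measurable_fst)))
      (Real.exp (β * t) * (MF + (MP + MN) * C))
      (fun a ha b hb => by
        rw [abs_mul, abs_of_pos (Real.exp_pos _)]
        refine mul_le_mul (Real.exp_le_exp.mpr (by nlinarith [hb.2])) ?_ (abs_nonneg _)
          (Real.exp_pos _).le
        exact (abs_add_le _ _).trans (add_le_add (hMF' a ⟨ha.1.le, ha.2⟩) (hgb a)))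
    have h2 : ∫ s in Ioc (0:ℝ) t, Real.exp (β * s) * x s
        = ∫ a in Ioc (0:ℝ) t, ∫ b in Ioc a t, Real.exp (β * b) * (F a + g a) := by
      rw [h1, ← hswap2]
    have h3 : ∀ a ∈ Ioc (0:ℝ) t, (∫ b in Ioc a t, Real.exp (β * b) * (F a + g a))
        = (Real.exp (β * t) - Real.exp (β * a)) / β * (F a + g a) := by
      intro a ha
      rw [integral_mul_const (F a + g a) (fun b => Real.exp (β * b)),
        hexp1 β (ne_of_gt hβ0) a t ha.2]
    have h4 : ∫ s in Ioc (0:ℝ) t, Real.exp (β * s) * x s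
        = ∫ a in Ioc (0:ℝ) t, (Real.exp (β * t) - Real.exp (β * a)) / β * (F a + g a) := by
      rw [h2]; exact setIntegral_congr_fun measurableSet_Ioc h3
    have hφint : IntegrableOn (fun a => F a + g a) (Ioc (0:ℝ) t) :=
      hFc.integrableOn_Ioc.add (hgint t)
    have hii1 : IntegrableOn (fun a => Real.exp (β * t) / β * (F a + g a)) (Ioc (0:ℝ) t) :=
      hφint.const_mul _
    have heF : IntegrableOn (fun a => Real.exp (β * a) * F a) (Ioc (0:ℝ) t) :=
      ((Real.continuous_exp.comp (continuous_const.mul continuous_id)).mul hFc).integrableOn_Ioc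
    have heg : IntegrableOn (fun a => Real.exp (β * a) * g a) (Ioc (0:ℝ) t) :=
      integrableOn_Ioc_of_bounded (D := Real.exp (β * t) * ((MP + MN) * C))
        (((Real.measurable_exp.comp (measurable_const.mul measurable_id)).stronglyMeasurable.mul
          hgm).aestronglyMeasurable)
        (fun s hs => by
          rw [abs_mul, abs_of_pos (Real.exp_pos _)]
          exact mul_le_mul (Real.exp_le_exp.mpr (by nlinarith [hs.2])) (hgb s) (abs_nonneg _)
            (Real.exp_pos _).le)
    have hii2 : IntegrableOn (fun a => Real.exp (β * a) / β * (F a + g a)) (Ioc (0:ℝ) t) := by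
      have hE : IntegrableOn (fun a => Real.exp (β * a) * (F a + g a)) (Ioc (0:ℝ) t) := by
        refine IntegrableOn.congr_fun (heF.add heg)
          (fun a _ => by simp only [Pi.add_apply]; ring) measurableSet_Ioc
      refine IntegrableOn.congr_fun (hE.const_mul (1/β))
        (fun a _ => by ring) measurableSet_Ioc
    have h5 : ∫ s in Ioc (0:ℝ) t, Real.exp (β * s) * x s
        = Real.exp (β * t) / β * x t
          - ∫ a in Ioc (0:ℝ) t, Real.exp (β * a) / β * (F a + g a) := by
      rw [h4]
      have hsplit : ∀ a : ℝ, (Real.exp (β * t) - Real.exp (β * a)) / β * (F a + g a)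
          = Real.exp (β * t) / β * (F a + g a) - Real.exp (β * a) / β * (F a + g a) :=
        fun a => by ring
      simp only [hsplit]
      rw [integral_sub hii1 hii2]
      congr 1
      rw [integral_const_mul, integral_add hFc.integrableOn_Ioc (hgint t), ← hmain t ht]
    have h6 : ∫ a in Ioc (0:ℝ) t, Real.exp (β * a) / β * (F a + g a)
        = (1/β) * ((∫ a in Ioc (0:ℝ) t, Real.exp (β * a) * F a)
          + ∫ a in Ioc (0:ℝ) t, Real.exp (β * a) * g a) := by
      rw [← integral_add heF heg, ← integral_const_mul]
      exact setIntegral_congr_fun measurableSet_Ioc (fun a _ => by ring)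
    have hβne : β ≠ 0 := ne_of_gt hβ0
    rw [h6] at h5
    have h7 := congrArg (fun z => β * z) h5
    field_simp at h7
    linarith [h7]
  -- final bound
  refine ⟨C + β * C / (α - β) + (MP + MN) * (C * Real.exp (α * τ)) / (α - β), ?_, ?_⟩
  · have t1 : 0 ≤ β * C / (α - β) := div_nonneg (mul_nonneg hβ0.le hC.le) hαβ.le
    have t2 : 0 ≤ (MP + MN) * (C * Real.exp (α * τ)) / (α - β) :=
      div_nonneg (mul_nonneg (add_nonneg hMP0 hMN0) (by positivity)) hαβ.le
    linarith
  intro t ht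
  have hgoal1 : ∫ s in (0:ℝ)..t, Real.exp (β * s) * f s
      = ∫ s in Ioc (0:ℝ) t, Real.exp (β * s) * F s := by
    have hEq : EqOn (fun s => Real.exp (β * s) * f s)
        (fun s => Real.exp (β * s) * F s) (uIcc (0:ℝ) t) := by
      intro s hs
      rw [uIcc_of_le ht] at hs
      simp only
      rw [hFeq s hs.1]
    rw [intervalIntegral.integral_congr hEq, intervalIntegral.integral_of_le ht]
  rw [hgoal1, hibp t ht]
  have habsle : ∀ (h : ℝ → ℝ) (D : ℝ), 0 ≤ D →
      AEStronglyMeasurable h (volume.restrict (Ioc (0:ℝ) t)) →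
      (∀ s ∈ Ioc (0:ℝ) t, |h s| ≤ D * Real.exp ((β - α) * s)) →
      |∫ s in Ioc (0:ℝ) t, h s| ≤ D / (α - β) := by
    intro h D hD hm hb
    have hDe : ∀ s ∈ Ioc (0:ℝ) t, |h s| ≤ D := fun s hs => (hb s hs).trans
      (by nlinarith [Real.exp_le_one_iff.mpr (by nlinarith [hs.1] : (β - α) * s ≤ 0),
        Real.exp_pos ((β - α) * s)])
    have hint : IntegrableOn h (Ioc (0:ℝ) t) := integrableOn_Ioc_of_bounded hm hDe
    have hcont : Continuous (fun s => D * Real.exp ((β - α) * s)) :=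
      continuous_const.mul (Real.continuous_exp.comp (continuous_const.mul continuous_id))
    have hcne : β - α ≠ 0 := ne_of_lt (by linarith)
    calc |∫ s in Ioc (0:ℝ) t, h s| ≤ ∫ s in Ioc (0:ℝ) t, |h s| := by
          simpa [Real.norm_eq_abs] using
            norm_integral_le_integral_norm (μ := volume.restrict (Ioc (0:ℝ) t)) h
      _ ≤ ∫ s in Ioc (0:ℝ) t, D * Real.exp ((β - α) * s) :=
          setIntegral_mono_on hint.abs hcont.integrableOn_Ioc measurableSet_Ioc hb
      _ = D * ∫ s in Ioc (0:ℝ) t, Real.exp ((β - α) * s) := integral_const_mul _ _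
      _ ≤ D * (1 / (α - β)) := by
          refine mul_le_mul_of_nonneg_left ?_ hD
          rw [hexp1 (β - α) hcne 0 t ht, mul_zero, Real.exp_zero]
          have he1 : Real.exp ((β - α) * t) ≤ 1 := Real.exp_le_one_iff.mpr (by nlinarith)
          have heq : (Real.exp ((β - α) * t) - 1) / (β - α)
              = (1 - Real.exp ((β - α) * t)) / (α - β) := by
            rw [div_eq_div_iff hcne hαβ.ne']; ring
          rw [heq]
          exact (div_le_div_iff_of_pos_right hαβ).mpr (by linarith [Real.exp_pos ((β - α) * t)])
      _ = D / (α - β) := by rw [mul_one_div]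
  have expshift : ∀ s : ℝ, Real.exp (β * s) * Real.exp (-α * s) = Real.exp ((β - α) * s) := by
    intro s; rw [← Real.exp_add]; congr 1; ring
  have T1 : |Real.exp (β * t) * x t| ≤ C := by
    rw [abs_mul, abs_of_pos (Real.exp_pos _)]
    calc Real.exp (β * t) * |x t| ≤ Real.exp (β * t) * (C * Real.exp (-α * t)) :=
          mul_le_mul_of_nonneg_left (hxb t ht) (Real.exp_pos _).le
      _ = C * Real.exp ((β - α) * t) := by rw [← expshift t]; ring
      _ ≤ C * 1 := mul_le_mul_of_nonneg_left (Real.exp_le_one_iff.mpr (by nlinarith)) hC.le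
      _ = C := mul_one C
  have T2 : |∫ s in Ioc (0:ℝ) t, Real.exp (β * s) * x s| ≤ C / (α - β) := by
    refine habsle _ C hC.le
      (((Real.measurable_exp.comp (measurable_const.mul measurable_id)).mul
        hxm.measurable).aestronglyMeasurable) (fun s hs => ?_)
    rw [abs_mul, abs_of_pos (Real.exp_pos _)]
    calc Real.exp (β * s) * |x s| ≤ Real.exp (β * s) * (C * Real.exp (-α * s)) :=
          mul_le_mul_of_nonneg_left (hxb s hs.1.le) (Real.exp_pos _).le
      _ = C * Real.exp ((β - α) * s) := by rw [← expshift s]; ring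
  have T3 : |∫ s in Ioc (0:ℝ) t, Real.exp (β * s) * g s|
      ≤ (MP + MN) * (C * Real.exp (α * τ)) / (α - β) := by
    refine habsle _ _ (mul_nonneg (add_nonneg hMP0 hMN0) (by positivity))
      (((Real.measurable_exp.comp (measurable_const.mul measurable_id)).mul
        hgm.measurable).aestronglyMeasurable) (fun s hs => ?_)
    rw [abs_mul, abs_of_pos (Real.exp_pos _)]
    calc Real.exp (β * s) * |g s|
        ≤ Real.exp (β * s) * ((MP + MN) * (C * Real.exp (α * τ)) * Real.exp (-α * s)) :=
          mul_le_mul_of_nonneg_left (hgb' s hs.1.le) (Real.exp_pos _).le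
      _ = (MP + MN) * (C * Real.exp (α * τ)) * Real.exp ((β - α) * s) := by
          rw [← expshift s]; ring
  have habs3 : ∀ a b c : ℝ, |a - b - c| ≤ |a| + |b| + |c| := by
    intro a b c
    have h1 : |a - b - c| ≤ |a - b| + |c| := habs2 _ _
    have h2 : |a - b| ≤ |a| + |b| := habs2 _ _
    linarith
  refine (habs3 _ _ _).trans ?_
  have hT2' : |β * ∫ s in Ioc (0:ℝ) t, Real.exp (β * s) * x s|
      ≤ β * (C / (α - β)) := by
    rw [abs_mul, abs_of_pos hβ0]
    exact mul_le_mul_of_nonneg_left T2 hβ0.le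
  have hr1 : β * (C / (α - β)) = β * C / (α - β) := by ring
  linarith [T1, T3, hT2']
end

section
/- Let τ > 0, let ν be a finite signed Borel measure on [-τ,0], let r be the differential resolvent of ν, extended by r(t) = 0 for t < 0, and assume r ∈ L¹(0,∞). Let f : [0,∞) → ℝ be continuous and suppose r ∗ f ∈ L²(0,∞). Then the function t ↦ ∫_0^t e^{-(t-s)} f(s) ds belongs to L²(0,∞). -/
open MeasureTheory Filter Set
open Real
open scoped ENNReal NNReal

lemma aux_finite_restrict {s : Set ℝ} (h : volume s ≠ ⊤) :
    IsFiniteMeasure (volume.restrict s) :=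
  ⟨by rw [Measure.restrict_apply_univ]; exact h.lt_top⟩

lemma aux_integrable_of_bound {α : Type*} [MeasurableSpace α] (μ : Measure α) [IsFiniteMeasure μ]
    {F : α → ℝ} (hm : AEStronglyMeasurable F μ) {C : ℝ} (hb : ∀ᵐ x ∂μ, |F x| ≤ C) :
    Integrable F μ :=
  ⟨hm, HasFiniteIntegral.of_bounded (C := C) (by simpa [Real.norm_eq_abs] using hb)⟩

lemma aux_ae_prod_mem {α β : Type*} [MeasurableSpace α] [MeasurableSpace β]
    (μ : Measure α) (ν : Measure β) [SFinite μ] [SFinite ν]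
    {A : Set α} {B : Set β} (hA : μ Aᶜ = 0) (hB : ν Bᶜ = 0) :
    ∀ᵐ p ∂(μ.prod ν), p.1 ∈ A ∧ p.2 ∈ B := by
  rw [ae_iff]
  refine measure_mono_null (t := (Aᶜ ×ˢ (univ : Set β)) ∪ ((univ : Set α) ×ˢ Bᶜ))
    (fun p hp => ?_) ?_
  · by_cases h1 : p.1 ∈ A
    · right; exact ⟨trivial, fun h2 => hp ⟨h1, h2⟩⟩
    · left; exact ⟨h1, trivial⟩
  · refine measure_union_null ?_ ?_ <;> rw [Measure.prod_prod] <;> simp [hA, hB]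

lemma aux_tri_swap {t : ℝ} (ht : 0 ≤ t) (F : ℝ → ℝ → ℝ)
    (hm : StronglyMeasurable (Function.uncurry F)) {C : ℝ}
    (hb : ∀ σ ∈ Ioc (0:ℝ) t, ∀ s ∈ Ioc (0:ℝ) t, |F σ s| ≤ C) :
    ∫ s in (0:ℝ)..t, (∫ σ in s..t, F σ s) = ∫ σ in (0:ℝ)..t, ∫ s in (0:ℝ)..σ, F σ s := by
  have : IsFiniteMeasure (volume.restrict (Ioc (0:ℝ) t)) :=
    aux_finite_restrict (by simp [Real.volume_Ioc])
  set P : ℝ × ℝ → ℝ := ({p : ℝ × ℝ | p.1 < p.2}).indicator (fun p => F p.2 p.1) with hP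
  have hPm : StronglyMeasurable P :=
    (hm.comp_measurable (measurable_snd.prodMk measurable_fst)).indicator
      (measurableSet_lt measurable_fst measurable_snd)
  have hPae : ∀ᵐ p : ℝ × ℝ ∂((volume.restrict (Ioc (0:ℝ) t)).prod (volume.restrict (Ioc (0:ℝ) t))),
      p.1 ∈ Ioc (0:ℝ) t ∧ p.2 ∈ Ioc (0:ℝ) t := by
    apply aux_ae_prod_mem <;>
      · rw [Measure.restrict_apply (measurableSet_Ioc.compl)]
        simp
  have hPint : Integrable P
      ((volume.restrict (Ioc (0:ℝ) t)).prod (volume.restrict (Ioc (0:ℝ) t))) := by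
    refine aux_integrable_of_bound _ hPm.aestronglyMeasurable (C := |C|) ?_
    filter_upwards [hPae] with p hp
    by_cases h : p.1 < p.2
    · simp only [hP, indicator_apply, mem_setOf_eq, if_pos h]
      exact (hb _ hp.2 _ hp.1).trans (le_abs_self C)
    · simp only [hP, indicator_apply, mem_setOf_eq, if_neg h]
      simp
  calc ∫ s in (0:ℝ)..t, (∫ σ in s..t, F σ s)
      = ∫ s in Ioc (0:ℝ) t, ∫ σ in Ioc (0:ℝ) t, P (s, σ) := by
        rw [intervalIntegral.integral_of_le ht]
        refine setIntegral_congr_fun measurableSet_Ioc (fun s hs => ?_)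
        rw [intervalIntegral.integral_of_le hs.2]
        have h1 : ∀ σ : ℝ, P (s, σ) = (Ioi s).indicator (fun σ => F σ s) σ := by
          intro σ
          simp only [hP, indicator_apply, mem_setOf_eq, mem_Ioi]
        simp_rw [h1]
        rw [setIntegral_indicator measurableSet_Ioi]
        have hset : Ioc (0:ℝ) t ∩ Ioi s = Ioc s t := by
          ext x
          simp only [mem_inter_iff, mem_Ioc, mem_Ioi]
          constructor
          · rintro ⟨⟨_, hxt⟩, hsx⟩; exact ⟨hsx, hxt⟩
          · rintro ⟨hsx, hxt⟩; exact ⟨⟨hs.1.trans hsx, hxt⟩, hsx⟩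
        rw [hset]
    _ = ∫ σ in Ioc (0:ℝ) t, ∫ s in Ioc (0:ℝ) t, P (s, σ) := by
        exact integral_integral_swap (f := fun s σ => P (s, σ)) hPint
    _ = ∫ σ in (0:ℝ)..t, ∫ s in (0:ℝ)..σ, F σ s := by
        rw [intervalIntegral.integral_of_le ht]
        refine setIntegral_congr_fun measurableSet_Ioc (fun σ hσ => ?_)
        have h1 : ∀ s : ℝ, P (s, σ) = (Iio σ).indicator (fun s => F σ s) s := by
          intro s
          simp only [hP, indicator_apply, mem_setOf_eq, mem_Iio]
        simp_rw [h1]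
        rw [setIntegral_indicator measurableSet_Iio,
          intervalIntegral.integral_of_le hσ.1.le, integral_Ioc_eq_integral_Ioo]
        have hset : Ioc (0:ℝ) t ∩ Iio σ = Ioo (0:ℝ) σ := by
          ext x
          simp only [mem_inter_iff, mem_Ioc, mem_Iio, mem_Ioo]
          constructor
          · rintro ⟨⟨hx0, _⟩, hxσ⟩; exact ⟨hx0, hxσ⟩
          · rintro ⟨hx0, hxσ⟩; exact ⟨⟨hx0, hxσ.le.trans hσ.2⟩, hxσ⟩
        rw [hset]

lemma aux_mem2_lint {f : ℝ → ℝ} {μ : Measure ℝ} (h : MemLp f 2 μ) :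
    ∫⁻ x, (‖f x‖₊ : ℝ≥0∞) ^ (2:ℝ) ∂μ < ⊤ := by
  have h2 := h.2
  rw [eLpNorm_eq_lintegral_rpow_enorm_toReal (two_ne_zero) (ENNReal.ofNat_ne_top)] at h2
  simp only [ENNReal.toReal_ofNat] at h2
  by_contra hc
  push_neg at hc
  have : (∫⁻ x, (‖f x‖₊ : ℝ≥0∞) ^ (2:ℝ) ∂μ) = ⊤ := top_le_iff.mp hc
  rw [show (∫⁻ x, ‖f x‖ₑ ^ (2:ℝ) ∂μ) = ⊤ from this] at h2
  simp [ENNReal.top_rpow_of_pos (by norm_num : (0:ℝ) < 1/2)] at h2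

lemma aux_mem2_of_lint {f : ℝ → ℝ} {μ : Measure ℝ} (hm : AEStronglyMeasurable f μ)
    (h : ∫⁻ x, (‖f x‖₊ : ℝ≥0∞) ^ (2:ℝ) ∂μ < ⊤) : MemLp f 2 μ := by
  refine ⟨hm, ?_⟩
  rw [eLpNorm_eq_lintegral_rpow_enorm_toReal (two_ne_zero) (ENNReal.ofNat_ne_top)]
  simp only [ENNReal.toReal_ofNat]
  exact ENNReal.rpow_lt_top_of_nonneg (by norm_num) h.ne

lemma aux_sq_add_le (a b : ℝ≥0∞) : (a + b) ^ (2:ℝ) ≤ 4 * (a ^ (2:ℝ) + b ^ (2:ℝ)) := by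
  have h1 : a + b ≤ 2 * (a ⊔ b) := by
    rw [two_mul]
    exact add_le_add le_sup_left le_sup_right
  have h2 : (a + b) ^ (2:ℝ) ≤ (2 * (a ⊔ b)) ^ (2:ℝ) :=
    ENNReal.rpow_le_rpow h1 (by norm_num)
  refine h2.trans ?_
  rw [ENNReal.mul_rpow_of_nonneg _ _ (by norm_num : (0:ℝ) ≤ 2)]
  have h3 : ((2:ℝ≥0∞)) ^ (2:ℝ) = 4 := by
    rw [show (2:ℝ) = ((2:ℕ):ℝ) by norm_num, ENNReal.rpow_natCast]
    norm_num
  rw [h3]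
  gcongr
  rcases le_total a b with h | h
  · rw [sup_eq_right.2 h]; exact le_add_self
  · rw [sup_eq_left.2 h]; exact le_self_add

lemma aux_exp_lint_Ioc {t : ℝ} (ht : 0 ≤ t) :
    ∫⁻ σ in Ioc (0:ℝ) t, ENNReal.ofReal (Real.exp (σ - t)) ≤ 1 := by
  have hint : IntegrableOn (fun σ => Real.exp (σ - t)) (Ioc (0:ℝ) t) :=
    (Real.continuous_exp.comp (continuous_id.sub continuous_const)).integrableOn_Ioc
  rw [← ofReal_integral_eq_lintegral_ofReal hint (ae_of_all _ fun σ => (Real.exp_pos _).le)]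
  rw [← intervalIntegral.integral_of_le ht,
    intervalIntegral.integral_comp_sub_right (fun x => Real.exp x) t,
    integral_exp]
  have hle : Real.exp (t - t) - Real.exp (0 - t) ≤ 1 := by
    rw [sub_self, Real.exp_zero]
    have := (Real.exp_pos (0 - t)).le
    linarith
  calc ENNReal.ofReal (Real.exp (t - t) - Real.exp (0 - t)) ≤ ENNReal.ofReal 1 :=
        ENNReal.ofReal_le_ofReal hle
    _ = 1 := ENNReal.ofReal_one

lemma aux_exp_lint_Ici (σ : ℝ) :
    ∫⁻ t in Ici σ, ENNReal.ofReal (Real.exp (σ - t)) ≤ 1 := by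
  have heq : ∀ t : ℝ, Real.exp (σ - t) = Real.exp σ * Real.exp (-1 * t) := by
    intro t
    rw [← Real.exp_add]
    ring_nf
  have hint : IntegrableOn (fun t => Real.exp (σ - t)) (Ioi σ) := by
    have h1 := (exp_neg_integrableOn_Ioi σ (by norm_num : (0:ℝ) < 1)).const_mul (Real.exp σ)
    refine h1.congr (ae_of_all _ fun t => (heq t).symm)
  have hIoi : ∫⁻ t in Ioi σ, ENNReal.ofReal (Real.exp (σ - t)) ≤ 1 := by
    rw [← ofReal_integral_eq_lintegral_ofReal hint (ae_of_all _ fun t => (Real.exp_pos _).le)]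
    have : ∫ t in Ioi σ, Real.exp (σ - t) = Real.exp σ * Real.exp (-σ) := by
      simp_rw [heq]
      rw [MeasureTheory.integral_const_mul]
      congr 1
      have := integral_exp_neg_Ioi σ
      simpa [neg_mul, one_mul] using this
    rw [this, ← Real.exp_add]
    simp
  calc ∫⁻ t in Ici σ, ENNReal.ofReal (Real.exp (σ - t))
      = ∫⁻ t in Ioi σ, ENNReal.ofReal (Real.exp (σ - t)) :=
        (setLIntegral_congr (Ioi_ae_eq_Ici (a := σ))).symm
    _ ≤ 1 := hIoi

lemma aux_kernel_L2 {H : ℝ → ℝ} (hm : Measurable H)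
    (h2 : MemLp H 2 (volume.restrict (Ioi (0:ℝ)))) :
    MemLp (fun t => ∫ σ in (0:ℝ)..t, Real.exp (-(t - σ)) * H σ) 2
      (volume.restrict (Ioi (0:ℝ))) := by
  have hfun : ∀ t σ : ℝ, Real.exp (-(t - σ)) = Real.exp (σ - t) := fun t σ => by rw [neg_sub]
  have hSmeas : MeasurableSet {q : ℝ × ℝ | 0 < q.2 ∧ q.2 ≤ q.1} :=
    MeasurableSet.inter (measurableSet_lt measurable_const measurable_snd)
      (measurableSet_le measurable_snd measurable_fst)
  set Q : ℝ × ℝ → ℝ := ({q : ℝ × ℝ | 0 < q.2 ∧ q.2 ≤ q.1}).indicator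
      (fun q => Real.exp (q.2 - q.1) * H q.2) with hQ
  have hQm : StronglyMeasurable Q := by
    apply Measurable.stronglyMeasurable
    exact Measurable.indicator
      (((measurable_snd.sub measurable_fst).exp).mul (hm.comp measurable_snd)) hSmeas
  have hTmeq : ∀ t ∈ Ioi (0:ℝ), (∫ σ in (0:ℝ)..t, Real.exp (-(t - σ)) * H σ) = ∫ σ, Q (t, σ) := by
    intro t ht
    rw [intervalIntegral.integral_of_le (le_of_lt ht)]
    have h1 : ∀ σ, Q (t, σ) = (Ioc (0:ℝ) t).indicator (fun σ => Real.exp (σ - t) * H σ) σ := by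
      intro σ; simp only [hQ, indicator_apply, mem_setOf_eq, mem_Ioc]
    simp_rw [h1]
    rw [integral_indicator measurableSet_Ioc]
    exact setIntegral_congr_fun measurableSet_Ioc (fun σ _ => by rw [hfun])
  have hTm : AEStronglyMeasurable (fun t => ∫ σ in (0:ℝ)..t, Real.exp (-(t - σ)) * H σ)
      (volume.restrict (Ioi (0:ℝ))) := by
    refine (hQm.integral_prod_right' (ν := volume)).aestronglyMeasurable.congr ?_
    filter_upwards [ae_restrict_mem measurableSet_Ioi] with t ht
    exact (hTmeq t ht).symm
  refine aux_mem2_of_lint hTm ?_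
  set W : ℝ → ℝ≥0∞ := fun σ => (‖H σ‖₊ : ℝ≥0∞) with hW
  have hWm : Measurable W := hm.nnnorm.coe_nnreal_ennreal
  have key : ∀ t ∈ Ioi (0:ℝ), (‖∫ σ in (0:ℝ)..t, Real.exp (-(t - σ)) * H σ‖₊ : ℝ≥0∞) ^ (2:ℝ)
      ≤ ∫⁻ σ in Ioc (0:ℝ) t, ENNReal.ofReal (Real.exp (σ - t)) * (W σ) ^ (2:ℝ) := by
    intro t ht
    have h0t : (0:ℝ) ≤ t := le_of_lt ht
    have e1 : (‖∫ σ in (0:ℝ)..t, Real.exp (-(t - σ)) * H σ‖₊ : ℝ≥0∞)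
        ≤ ∫⁻ σ in Ioc (0:ℝ) t, ENNReal.ofReal (Real.exp (σ - t)) * W σ := by
      rw [intervalIntegral.integral_of_le h0t]
      refine le_trans (enorm_integral_le_lintegral_enorm _) ?_
      refine lintegral_mono_ae (ae_of_all _ fun σ => le_of_eq ?_)
      rw [enorm_mul, Real.enorm_eq_ofReal (Real.exp_pos _).le, hfun, enorm_eq_nnnorm]
    set k : ℝ → ℝ≥0∞ := fun σ => ENNReal.ofReal (Real.exp ((σ - t)/2)) with hk
    have hkm : Measurable k :=
      ENNReal.measurable_ofReal.comp
        (Real.continuous_exp.measurable.comp ((measurable_id.sub_const t).div_const 2))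
    have hk2 : ∀ σ, k σ ^ (2:ℝ) = ENNReal.ofReal (Real.exp (σ - t)) := by
      intro σ
      rw [hk, ENNReal.ofReal_rpow_of_pos (Real.exp_pos _)]
      congr 1
      rw [show (2:ℝ) = ((2:ℕ):ℝ) by norm_num, Real.rpow_natCast, pow_two, ← Real.exp_add]
      congr 1
      push_cast
      ring
    have hsplit : ∀ σ, ENNReal.ofReal (Real.exp (σ - t)) * W σ = k σ * (k σ * W σ) := by
      intro σ
      rw [hk, ← mul_assoc, ← ENNReal.ofReal_mul (Real.exp_pos _).le, ← Real.exp_add, add_halves]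
    have hCS := ENNReal.lintegral_mul_le_Lp_mul_Lq (volume.restrict (Ioc (0:ℝ) t))
        Real.HolderConjugate.two_two hkm.aemeasurable
        ((hkm.mul (hWm)).aemeasurable)
    have e2 : ∫⁻ σ in Ioc (0:ℝ) t, ENNReal.ofReal (Real.exp (σ - t)) * W σ
        ≤ (∫⁻ σ in Ioc (0:ℝ) t, ENNReal.ofReal (Real.exp (σ - t)) * W σ ^ (2:ℝ)) ^ (1/2 : ℝ) := by
      simp_rw [hsplit]
      refine le_trans hCS ?_
      have f1 : (∫⁻ σ in Ioc (0:ℝ) t, k σ ^ (2:ℝ)) ^ (1/2 : ℝ) ≤ 1 := by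
        refine ENNReal.rpow_le_one ?_ (by norm_num)
        simp_rw [hk2]
        exact aux_exp_lint_Ioc h0t
      have f2 : ∀ σ, (k σ * W σ) ^ (2:ℝ) = ENNReal.ofReal (Real.exp (σ - t)) * W σ ^ (2:ℝ) := by
        intro σ
        rw [ENNReal.mul_rpow_of_nonneg _ _ (by norm_num : (0:ℝ) ≤ 2), hk2]
      calc (∫⁻ σ in Ioc (0:ℝ) t, k σ ^ (2:ℝ)) ^ (1/2:ℝ)
            * (∫⁻ σ in Ioc (0:ℝ) t, (k σ * W σ) ^ (2:ℝ)) ^ (1/2:ℝ)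
          ≤ 1 * (∫⁻ σ in Ioc (0:ℝ) t, (k σ * W σ) ^ (2:ℝ)) ^ (1/2:ℝ) := by gcongr
        _ = (∫⁻ σ in Ioc (0:ℝ) t, (k σ * W σ) ^ (2:ℝ)) ^ (1/2:ℝ) := one_mul _
        _ = (∫⁻ σ in Ioc (0:ℝ) t, ENNReal.ofReal (Real.exp (σ - t)) * W σ ^ (2:ℝ)) ^ (1/2:ℝ) := by
            simp_rw [f2]
    calc (‖∫ σ in (0:ℝ)..t, Real.exp (-(t - σ)) * H σ‖₊ : ℝ≥0∞) ^ (2:ℝ)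
        ≤ ((∫⁻ σ in Ioc (0:ℝ) t, ENNReal.ofReal (Real.exp (σ - t)) * W σ ^ (2:ℝ)) ^ (1/2:ℝ))
            ^ (2:ℝ) := ENNReal.rpow_le_rpow (e1.trans e2) (by norm_num)
      _ = ∫⁻ σ in Ioc (0:ℝ) t, ENNReal.ofReal (Real.exp (σ - t)) * W σ ^ (2:ℝ) := by
          rw [← ENNReal.rpow_mul]
          norm_num
  set Φ : ℝ → ℝ → ℝ≥0∞ := fun t σ => ({q : ℝ × ℝ | 0 < q.2 ∧ q.2 ≤ q.1}).indicator
      (fun q => ENNReal.ofReal (Real.exp (q.2 - q.1)) * W q.2 ^ (2:ℝ)) (t, σ) with hΦ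
  have hΦm : Measurable (Function.uncurry Φ) := by
    apply Measurable.indicator
    · exact (ENNReal.measurable_ofReal.comp
        ((measurable_snd.sub measurable_fst).exp)).mul
        ((hWm.comp measurable_snd).pow_const _)
    · exact hSmeas
  have step1 : ∫⁻ t in Ioi (0:ℝ), (‖∫ σ in (0:ℝ)..t, Real.exp (-(t - σ)) * H σ‖₊ : ℝ≥0∞) ^ (2:ℝ)
      ≤ ∫⁻ t in Ioi (0:ℝ), ∫⁻ σ, Φ t σ := by
    refine lintegral_mono_ae ?_
    filter_upwards [ae_restrict_mem measurableSet_Ioi] with t ht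
    refine (key t ht).trans (le_of_eq ?_)
    rw [← lintegral_indicator measurableSet_Ioc]
    refine lintegral_congr fun σ => ?_
    simp only [hΦ, indicator_apply, mem_setOf_eq, mem_Ioc]
  have step2 : ∫⁻ t in Ioi (0:ℝ), ∫⁻ σ, Φ t σ = ∫⁻ σ, ∫⁻ t in Ioi (0:ℝ), Φ t σ :=
    lintegral_lintegral_swap hΦm.aemeasurable
  have step3 : ∀ σ, (∫⁻ t in Ioi (0:ℝ), Φ t σ) ≤ (Ioi (0:ℝ)).indicator
      (fun σ => W σ ^ (2:ℝ)) σ := by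
    intro σ
    by_cases hσ : 0 < σ
    · rw [indicator_apply, if_pos (mem_Ioi.2 hσ)]
      have hb : ∀ t, Φ t σ ≤ (Ici σ).indicator (fun t => ENNReal.ofReal (Real.exp (σ - t))) t
          * W σ ^ (2:ℝ) := by
        intro t
        by_cases h : 0 < σ ∧ σ ≤ t
        · refine le_of_eq ?_
          simp only [hΦ, indicator_apply, mem_setOf_eq, if_pos h, mem_Ici, if_pos h.2]
        · simp only [hΦ, indicator_apply, mem_setOf_eq, if_neg h]
          exact zero_le
      have hWfin : W σ ^ (2:ℝ) ≠ ⊤ := ENNReal.rpow_ne_top_of_nonneg (by norm_num) ENNReal.coe_ne_top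
      calc ∫⁻ t in Ioi (0:ℝ), Φ t σ
          ≤ ∫⁻ t in Ioi (0:ℝ), (Ici σ).indicator (fun t => ENNReal.ofReal (Real.exp (σ - t))) t
              * W σ ^ (2:ℝ) := lintegral_mono hb
        _ ≤ ∫⁻ t, (Ici σ).indicator (fun t => ENNReal.ofReal (Real.exp (σ - t))) t
              * W σ ^ (2:ℝ) := setLIntegral_le_lintegral _ _
        _ = (∫⁻ t, (Ici σ).indicator (fun t => ENNReal.ofReal (Real.exp (σ - t))) t)
              * W σ ^ (2:ℝ) := lintegral_mul_const' _ _ hWfin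
        _ ≤ 1 * W σ ^ (2:ℝ) := by
            gcongr
            rw [lintegral_indicator measurableSet_Ici]
            exact aux_exp_lint_Ici σ
        _ = W σ ^ (2:ℝ) := one_mul _
    · have hz : ∀ t, Φ t σ = 0 := by
        intro t
        simp only [hΦ, indicator_apply, mem_setOf_eq]
        rw [if_neg (fun h => hσ h.1)]
      simp only [hz, lintegral_zero]
      exact zero_le
  calc ∫⁻ t in Ioi (0:ℝ), (‖∫ σ in (0:ℝ)..t, Real.exp (-(t - σ)) * H σ‖₊ : ℝ≥0∞) ^ (2:ℝ)
      ≤ ∫⁻ σ, ∫⁻ t in Ioi (0:ℝ), Φ t σ := step1.trans (le_of_eq step2)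
    _ ≤ ∫⁻ σ, (Ioi (0:ℝ)).indicator (fun σ => W σ ^ (2:ℝ)) σ := lintegral_mono step3
    _ = ∫⁻ σ in Ioi (0:ℝ), W σ ^ (2:ℝ) := lintegral_indicator measurableSet_Ioi _
    _ < ⊤ := aux_mem2_lint h2

lemma aux_nu_conv_L2 {Y : ℝ → ℝ} (hYm : Measurable Y) (hY0 : ∀ x ≤ (0:ℝ), Y x = 0)
    (hY2 : MemLp Y 2 (volume.restrict (Ioi (0:ℝ)))) (μ : Measure ℝ) [IsFiniteMeasure μ] :
    ∫⁻ σ in Ioi (0:ℝ), (∫⁻ u, (‖Y (σ + u)‖₊ : ℝ≥0∞) ∂μ) ^ (2:ℝ) < ⊤ := by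
  set W : ℝ → ℝ≥0∞ := fun x => (‖Y x‖₊ : ℝ≥0∞) with hWdef
  have hWm : Measurable W := hYm.nnnorm.coe_nnreal_ennreal
  set E := ∫⁻ x in Ioi (0:ℝ), W x ^ (2:ℝ) with hEdef
  have hE : E < ⊤ := aux_mem2_lint hY2
  have hfull : ∫⁻ x, W x ^ (2:ℝ) = E := by
    rw [← lintegral_add_compl (fun x => W x ^ (2:ℝ)) measurableSet_Ioi]
    have hz : ∫⁻ x in (Ioi (0:ℝ))ᶜ, W x ^ (2:ℝ) = 0 := by
      rw [compl_Ioi]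
      have hzz : ∀ x ∈ Iic (0:ℝ), W x ^ (2:ℝ) = 0 := by
        intro x hx
        rw [hWdef]
        simp only [hY0 x hx, nnnorm_zero, ENNReal.coe_zero]
        exact ENNReal.zero_rpow_of_pos (by norm_num)
      rw [setLIntegral_congr_fun measurableSet_Iic hzz, lintegral_zero]
    rw [hz, add_zero]
  have hCS : ∀ σ : ℝ, (∫⁻ u, W (σ + u) ∂μ) ^ (2:ℝ) ≤ μ univ * ∫⁻ u, W (σ + u) ^ (2:ℝ) ∂μ := by
    intro σ
    have hmW : Measurable fun u => W (σ + u) := hWm.comp (measurable_const.add measurable_id)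
    have h2 := ENNReal.lintegral_mul_le_Lp_mul_Lq μ
        Real.HolderConjugate.two_two
        (f := fun _ => (1:ℝ≥0∞)) (g := fun u => W (σ + u))
        aemeasurable_const hmW.aemeasurable
    simp only [Pi.mul_apply, one_mul, ENNReal.one_rpow, lintegral_one] at h2
    calc (∫⁻ u, W (σ + u) ∂μ) ^ (2:ℝ)
        ≤ ((μ univ) ^ (1/2:ℝ) * (∫⁻ u, W (σ + u) ^ (2:ℝ) ∂μ) ^ (1/2:ℝ)) ^ (2:ℝ) :=
          ENNReal.rpow_le_rpow h2 (by norm_num)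
      _ = μ univ * ∫⁻ u, W (σ + u) ^ (2:ℝ) ∂μ := by
          rw [ENNReal.mul_rpow_of_nonneg _ _ (by norm_num : (0:ℝ) ≤ 2), ← ENNReal.rpow_mul,
            ← ENNReal.rpow_mul]
          norm_num
  have hu : ∀ u : ℝ, (∫⁻ σ in Ioi (0:ℝ), W (σ + u) ^ (2:ℝ)) ≤ E := by
    intro u
    calc ∫⁻ σ in Ioi (0:ℝ), W (σ + u) ^ (2:ℝ)
        ≤ ∫⁻ σ, W (σ + u) ^ (2:ℝ) := setLIntegral_le_lintegral _ _
      _ = ∫⁻ x, W x ^ (2:ℝ) := lintegral_add_right_eq_self (fun x => W x ^ (2:ℝ)) u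
      _ = E := hfull
  have hswap : ∫⁻ σ in Ioi (0:ℝ), ∫⁻ u, W (σ + u) ^ (2:ℝ) ∂μ
      = ∫⁻ u, (∫⁻ σ in Ioi (0:ℝ), W (σ + u) ^ (2:ℝ)) ∂μ := by
    refine lintegral_lintegral_swap ?_
    exact (((hWm.comp (measurable_fst.add measurable_snd))).pow_const _).aemeasurable
  calc ∫⁻ σ in Ioi (0:ℝ), (∫⁻ u, W (σ + u) ∂μ) ^ (2:ℝ)
      ≤ ∫⁻ σ in Ioi (0:ℝ), μ univ * ∫⁻ u, W (σ + u) ^ (2:ℝ) ∂μ := lintegral_mono fun σ => hCS σ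
    _ = μ univ * ∫⁻ σ in Ioi (0:ℝ), ∫⁻ u, W (σ + u) ^ (2:ℝ) ∂μ :=
        lintegral_const_mul' _ _ (measure_ne_top μ univ)
    _ = μ univ * ∫⁻ u, (∫⁻ σ in Ioi (0:ℝ), W (σ + u) ^ (2:ℝ)) ∂μ := by rw [hswap]
    _ ≤ μ univ * ∫⁻ _, E ∂μ := mul_le_mul_right (lintegral_mono fun u => hu u) _
    _ = μ univ * (E * μ univ) := by rw [lintegral_const]
    _ < ⊤ := by
        refine ENNReal.mul_lt_top (measure_lt_top μ univ) ?_
        exact ENNReal.mul_lt_top hE (measure_lt_top μ univ)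

lemma aux_intervalIntegrable {φ : ℝ → ℝ} {x : ℝ} (hx : 0 ≤ x)
    (hm : AEStronglyMeasurable φ (volume.restrict (Ioc (0:ℝ) x))) {C : ℝ}
    (hb : ∀ s ∈ Ioc (0:ℝ) x, |φ s| ≤ C) : IntervalIntegrable φ volume 0 x := by
  rw [intervalIntegrable_iff, uIoc_of_le hx]
  have : IsFiniteMeasure (volume.restrict (Ioc (0:ℝ) x)) :=
    aux_finite_restrict (by simp [Real.volume_Ioc])
  refine aux_integrable_of_bound _ hm (C := C) ?_
  filter_upwards [ae_restrict_mem measurableSet_Ioc] with s hs using hb s hs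

set_option maxHeartbeats 2000000 in
/-- If the differential resolvent `r` of `ν` is integrable on `(0,∞)` and the forced
solution `r ∗ f` belongs to `L²(0,∞)`, then `t ↦ ∫_0^t e^{-(t-s)} f(s) ds` belongs to
`L²(0,∞)`. -/
theorem exp_average_L2_of_forced_solution_L2
    (τ : ℝ) (hτ : 0 < τ) (ν : MeasureTheory.SignedMeasure ℝ)
    (hν : ν.totalVariation (Set.Icc (-τ) 0)ᶜ = 0)
    (r : ℝ → ℝ) (hr : IsResolvent ν r)
    (hrL1 : IntegrableOn r (Set.Ioi (0:ℝ)))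
    (f : ℝ → ℝ) (hf : ContinuousOn f (Set.Ici (0:ℝ)))
    (hconv : MemLp (fun t => ∫ s in (0:ℝ)..t, r (t - s) * f s) 2
      (MeasureTheory.volume.restrict (Set.Ioi (0:ℝ)))) :
    MemLp (fun t => ∫ s in (0:ℝ)..t, Real.exp (-(t - s)) * f s) 2
      (MeasureTheory.volume.restrict (Set.Ioi (0:ℝ))) := by
  obtain ⟨hr0, hrc, hreq⟩ := hr
  set μp := ν.toJordanDecomposition.posPart with hμp
  set μn := ν.toJordanDecomposition.negPart with hμn
  have hμpn : μp (Set.Icc (-τ) 0)ᶜ = 0 ∧ μn (Set.Icc (-τ) 0)ᶜ = 0 := by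
    have h1 : (μp + μn) (Set.Icc (-τ) 0)ᶜ = 0 := hν
    rw [Measure.add_apply] at h1
    exact add_eq_zero.mp h1
  have haeμp : ∀ᵐ u ∂μp, u ∈ Set.Icc (-τ) 0 := by
    rw [ae_iff]; exact hμpn.1
  have haeμn : ∀ᵐ u ∂μn, u ∈ Set.Icc (-τ) 0 := by
    rw [ae_iff]; exact hμpn.2
  set fc : ℝ → ℝ := fun s => f (max s 0) with hfc
  have hfcc : Continuous fc :=
    hf.comp_continuous (continuous_id.max continuous_const)
      (fun x => mem_Ici.2 (le_max_right _ _))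
  have hfc_eq : ∀ s : ℝ, 0 ≤ s → fc s = f s := by
    intro s hs; rw [hfc]; simp [max_eq_left hs]
  have rmeas : Measurable r := by
    have hrmax : Continuous fun x => r (max x 0) :=
      hrc.comp_continuous (continuous_id.max continuous_const)
        (fun x => mem_Ici.2 (le_max_right _ _))
    have hre : r = fun x => (Ici (0:ℝ)).indicator (fun x => r (max x 0)) x := by
      funext x
      by_cases hx : 0 ≤ x
      · rw [indicator_of_mem (mem_Ici.2 hx), max_eq_left hx]
      · rw [indicator_of_notMem (by simpa using hx)]
        exact hr0 x (lt_of_not_ge hx)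
    rw [hre]
    exact hrmax.measurable.indicator measurableSet_Ici
  have rbdd : ∀ T : ℝ, ∃ C : ℝ, 0 ≤ C ∧ ∀ x ≤ T, |r x| ≤ C := by
    intro T
    obtain ⟨C, hC⟩ := (isCompact_Icc (a := (0:ℝ)) (b := max T 0)).exists_bound_of_continuousOn
      (hrc.mono (fun x hx => hx.1))
    refine ⟨max C 0, le_max_right _ _, fun x hx => ?_⟩
    by_cases h0 : x < 0
    · rw [hr0 x h0]; simp
    · push_neg at h0
      have h2 := hC x ⟨h0, le_trans hx (le_max_left T 0)⟩
      rw [Real.norm_eq_abs] at h2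
      exact h2.trans (le_max_left _ _)
  -- the density of the measure ν against r
  set g : ℝ → ℝ := fun a => (∫ u, r (a + u) ∂μp) - ∫ u, r (a + u) ∂μn with hgdef
  have hreq' : ∀ t : ℝ, 0 ≤ t → r t = 1 + ∫ s in (0:ℝ)..t, g s := by
    intro t ht
    have := hreq t ht
    simpa [sInt, hgdef] using this
  have gmeas : Measurable g := by
    have h1 : StronglyMeasurable (Function.uncurry fun a u => r (a + u)) :=
      (rmeas.comp (measurable_fst.add measurable_snd)).stronglyMeasurable
    exact ((h1.integral_prod_right' (ν := μp)).measurable).sub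
      ((h1.integral_prod_right' (ν := μn)).measurable)
  have gbd : ∀ T : ℝ, ∃ C : ℝ, 0 ≤ C ∧ ∀ a ≤ T, |g a| ≤ C := by
    intro T
    obtain ⟨C, hC0, hC⟩ := rbdd T
    refine ⟨C * (μp univ).toReal + C * (μn univ).toReal, by positivity, fun a ha => ?_⟩
    have hp : ‖∫ u, r (a + u) ∂μp‖ ≤ C * (μp univ).toReal := by
      refine norm_integral_le_of_norm_le_const ?_
      filter_upwards [haeμp] with u hu
      rw [Real.norm_eq_abs]
      exact hC _ (by linarith [hu.2])
    have hn : ‖∫ u, r (a + u) ∂μn‖ ≤ C * (μn univ).toReal := by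
      refine norm_integral_le_of_norm_le_const ?_
      filter_upwards [haeμn] with u hu
      rw [Real.norm_eq_abs]
      exact hC _ (by linarith [hu.2])
    rw [hgdef]
    rw [Real.norm_eq_abs] at hp hn
    calc |(∫ u, r (a + u) ∂μp) - ∫ u, r (a + u) ∂μn|
        ≤ |∫ u, r (a + u) ∂μp| + |∫ u, r (a + u) ∂μn| := abs_sub _ _
      _ ≤ C * (μp univ).toReal + C * (μn univ).toReal := add_le_add hp hn
  have hg0 : ∀ a : ℝ, a < 0 → g a = 0 := by
    intro a ha
    have hp : ∫ u, r (a + u) ∂μp = 0 := by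
      rw [← integral_zero ℝ ℝ (μ := μp)]
      refine integral_congr_ae ?_
      filter_upwards [haeμp] with u hu
      exact hr0 _ (by linarith [hu.2])
    have hn : ∫ u, r (a + u) ∂μn = 0 := by
      rw [← integral_zero ℝ ℝ (μ := μn)]
      refine integral_congr_ae ?_
      filter_upwards [haeμn] with u hu
      exact hr0 _ (by linarith [hu.2])
    rw [hgdef]
    simp only [hp, hn, sub_zero]
  -- the homogeneous solution convolved with fc
  set y₀ : ℝ → ℝ := fun x => ∫ s in (0:ℝ)..x, r (x - s) * fc s with hy₀
  have hy0neg : ∀ x : ℝ, x ≤ 0 → y₀ x = 0 := by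
    intro x hx
    rcases eq_or_lt_of_le hx with heq | hlt
    · rw [hy₀]; simp [heq]
    · rw [hy₀]
      simp only
      rw [intervalIntegral.integral_symm, intervalIntegral.integral_of_le hx]
      have hz : ∀ s ∈ Ioc x 0, r (x - s) * fc s = 0 := by
        intro s hs
        rw [hr0 (x - s) (by linarith [hs.1]), zero_mul]
      rw [setIntegral_congr_fun measurableSet_Ioc hz]
      simp
  have hy0m : Measurable y₀ := by
    set Y2 : ℝ × ℝ → ℝ := ({p : ℝ × ℝ | 0 < p.2 ∧ p.2 ≤ p.1}).indicator
      (fun p => r (p.1 - p.2) * fc p.2) with hY2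
    have hSm : MeasurableSet {p : ℝ × ℝ | 0 < p.2 ∧ p.2 ≤ p.1} :=
      MeasurableSet.inter (measurableSet_lt measurable_const measurable_snd)
        (measurableSet_le measurable_snd measurable_fst)
    have hY2m : StronglyMeasurable Y2 :=
      (((rmeas.comp (measurable_fst.sub measurable_snd)).mul
        (hfcc.measurable.comp measurable_snd)).indicator hSm).stronglyMeasurable
    have hkey : y₀ = fun x => ∫ s, Y2 (x, s) := by
      funext x
      by_cases hx : 0 ≤ x
      · rw [hy₀]
        simp only
        rw [intervalIntegral.integral_of_le hx]
        have h1 : ∀ s, Y2 (x, s) = (Ioc (0:ℝ) x).indicator (fun s => r (x - s) * fc s) s := by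
          intro s; simp only [hY2, indicator_apply, mem_setOf_eq, mem_Ioc]
        simp_rw [h1]
        rw [integral_indicator measurableSet_Ioc]
      · push_neg at hx
        rw [hy0neg x hx.le]
        have h1 : ∀ s, Y2 (x, s) = 0 := by
          intro s
          simp only [hY2, indicator_apply, mem_setOf_eq]
          rw [if_neg]
          rintro ⟨h1, h2⟩; linarith
        simp [h1]
    rw [hkey]
    exact (hY2m.integral_prod_right' (ν := volume)).measurable
  have hy0bd : ∀ T : ℝ, 0 ≤ T → ∃ C : ℝ, 0 ≤ C ∧ ∀ x ≤ T, |y₀ x| ≤ C := by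
    intro T hT
    obtain ⟨Cr, hCr0, hCr⟩ := rbdd T
    obtain ⟨Cf, hCf⟩ := (isCompact_Icc (a := (0:ℝ)) (b := T)).exists_bound_of_continuousOn
      hfcc.continuousOn
    refine ⟨Cr * max Cf 0 * T, by positivity, fun x hx => ?_⟩
    by_cases hx0 : x ≤ 0
    · rw [hy0neg x hx0]; simp; positivity
    · push_neg at hx0
      have hb : ∀ s ∈ Set.uIoc (0:ℝ) x, ‖r (x - s) * fc s‖ ≤ Cr * max Cf 0 := by
        intro s hs
        rw [uIoc_of_le hx0.le] at hs
        rw [norm_mul]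
        have h1 : ‖r (x - s)‖ ≤ Cr := by
          rw [Real.norm_eq_abs]; exact hCr _ (by linarith [hs.1, hx])
        have h2 : ‖fc s‖ ≤ max Cf 0 :=
          le_trans (hCf s ⟨hs.1.le, le_trans hs.2 hx⟩) (le_max_left _ _)
        exact mul_le_mul h1 h2 (norm_nonneg _) hCr0
      have := intervalIntegral.norm_integral_le_of_norm_le_const hb
      rw [hy₀]
      simp only
      rw [← Real.norm_eq_abs]
      refine this.trans ?_
      rw [abs_of_pos (by linarith : (0:ℝ) < x - 0)]
      have : x - 0 ≤ T := by linarith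
      nlinarith [mul_le_mul_of_nonneg_left this (by positivity : (0:ℝ) ≤ Cr * max Cf 0)]
  have hy0L2 : MemLp y₀ 2 (volume.restrict (Ioi (0:ℝ))) := by
    refine hconv.ae_eq ?_
    filter_upwards [ae_restrict_mem measurableSet_Ioi] with t ht
    rw [hy₀]
    simp only
    refine intervalIntegral.integral_congr ?_
    intro s hs
    rw [uIcc_of_le (le_of_lt ht)] at hs
    show r (t - s) * f s = r (t - s) * fc s
    rw [hfc_eq s hs.1]
  -- the measure convolution of y₀
  set G' : ℝ → ℝ := fun σ => (∫ u, y₀ (σ + u) ∂μp) - ∫ u, y₀ (σ + u) ∂μn with hG'def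
  have hG'm : Measurable G' := by
    have h1 : StronglyMeasurable (Function.uncurry fun σ u => y₀ (σ + u)) :=
      (hy0m.comp (measurable_fst.add measurable_snd)).stronglyMeasurable
    exact ((h1.integral_prod_right' (ν := μp)).measurable).sub
      ((h1.integral_prod_right' (ν := μn)).measurable)
  have hG'L2 : MemLp G' 2 (volume.restrict (Ioi (0:ℝ))) := by
    refine aux_mem2_of_lint hG'm.aestronglyMeasurable.restrict ?_
    set Ip : ℝ → ℝ≥0∞ := fun σ => ∫⁻ u, (‖y₀ (σ + u)‖₊ : ℝ≥0∞) ∂μp with hIp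
    set In : ℝ → ℝ≥0∞ := fun σ => ∫⁻ u, (‖y₀ (σ + u)‖₊ : ℝ≥0∞) ∂μn with hIn
    have hjm : Measurable fun p : ℝ × ℝ => (‖y₀ (p.1 + p.2)‖₊ : ℝ≥0∞) :=
      (hy0m.comp (measurable_fst.add measurable_snd)).nnnorm.coe_nnreal_ennreal
    have hIpm : Measurable Ip := hjm.lintegral_prod_right'
    have hInm : Measurable In := hjm.lintegral_prod_right'
    have hbd : ∀ σ : ℝ, (‖G' σ‖₊ : ℝ≥0∞) ^ (2:ℝ) ≤ 4 * (Ip σ ^ (2:ℝ) + In σ ^ (2:ℝ)) := by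
      intro σ
      have h1 : (‖G' σ‖₊ : ℝ≥0∞) ≤ Ip σ + In σ := by
        rw [hG'def]
        refine le_trans ?_ (add_le_add (enorm_integral_le_lintegral_enorm _)
          (enorm_integral_le_lintegral_enorm _))
        simp only
        rw [enorm_eq_nnnorm, enorm_eq_nnnorm, ← ENNReal.coe_add]
        exact_mod_cast nnnorm_sub_le _ _
      calc (‖G' σ‖₊ : ℝ≥0∞) ^ (2:ℝ) ≤ (Ip σ + In σ) ^ (2:ℝ) :=
            ENNReal.rpow_le_rpow h1 (by norm_num)
        _ ≤ 4 * (Ip σ ^ (2:ℝ) + In σ ^ (2:ℝ)) := aux_sq_add_le _ _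
    calc ∫⁻ σ in Ioi (0:ℝ), (‖G' σ‖₊ : ℝ≥0∞) ^ (2:ℝ)
        ≤ ∫⁻ σ in Ioi (0:ℝ), 4 * (Ip σ ^ (2:ℝ) + In σ ^ (2:ℝ)) := lintegral_mono fun σ => hbd σ
      _ = 4 * ∫⁻ σ in Ioi (0:ℝ), (Ip σ ^ (2:ℝ) + In σ ^ (2:ℝ)) :=
          lintegral_const_mul' _ _ (by norm_num)
      _ = 4 * ((∫⁻ σ in Ioi (0:ℝ), Ip σ ^ (2:ℝ)) + ∫⁻ σ in Ioi (0:ℝ), In σ ^ (2:ℝ)) := by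
          rw [lintegral_add_left (hIpm.pow_const _)]
      _ < ⊤ := by
          refine ENNReal.mul_lt_top (by norm_num) ?_
          exact ENNReal.add_lt_top.2 ⟨aux_nu_conv_L2 hy0m hy0neg hy0L2 μp,
            aux_nu_conv_L2 hy0m hy0neg hy0L2 μn⟩
  -- Step A: the resolvent kernel identity
  have stepA : ∀ a : ℝ, 0 ≤ a →
      Real.exp (-a) = r a - ∫ σ in (0:ℝ)..a, Real.exp (-(a - σ)) * (r σ + g σ) := by
    intro a ha
    obtain ⟨Cr, hCr0, hCr⟩ := rbdd a
    obtain ⟨Cg, hCg0, hCg⟩ := gbd a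
    have hri : IntervalIntegrable r volume 0 a :=
      aux_intervalIntegrable ha rmeas.aestronglyMeasurable.restrict (C := Cr)
        (fun s hs => hCr s hs.2)
    have hgi : IntervalIntegrable g volume 0 a :=
      aux_intervalIntegrable ha gmeas.aestronglyMeasurable.restrict (C := Cg)
        (fun s hs => hCg s hs.2)
    have heri : IntervalIntegrable (fun σ => Real.exp σ * r σ) volume 0 a := by
      refine aux_intervalIntegrable ha
        ((Real.continuous_exp.measurable.mul rmeas).aestronglyMeasurable.restrict)
        (C := Real.exp a * Cr) (fun s hs => ?_)
      rw [abs_mul, abs_of_pos (Real.exp_pos s)]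
      exact mul_le_mul (Real.exp_le_exp.2 hs.2) (hCr s hs.2) (abs_nonneg _) (Real.exp_pos a).le
    have hegi : IntervalIntegrable (fun σ => Real.exp σ * g σ) volume 0 a := by
      refine aux_intervalIntegrable ha
        ((Real.continuous_exp.measurable.mul gmeas).aestronglyMeasurable.restrict)
        (C := Real.exp a * Cg) (fun s hs => ?_)
      rw [abs_mul, abs_of_pos (Real.exp_pos s)]
      exact mul_le_mul (Real.exp_le_exp.2 hs.2) (hCg s hs.2) (abs_nonneg _) (Real.exp_pos a).le
    have hFm : StronglyMeasurable (Function.uncurry fun σ s => Real.exp σ * g s) :=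
      ((Real.continuous_exp.measurable.comp measurable_fst).mul
        (gmeas.comp measurable_snd)).stronglyMeasurable
    have hswap := aux_tri_swap ha (fun σ s => Real.exp σ * g s) hFm
      (C := Real.exp a * Cg) (fun σ hσ s hs => by
        rw [abs_mul, abs_of_pos (Real.exp_pos σ)]
        exact mul_le_mul (Real.exp_le_exp.2 hσ.2) (hCg s hs.2) (abs_nonneg _) (Real.exp_pos a).le)
    have hL : (∫ s in (0:ℝ)..a, (∫ σ in s..a, Real.exp σ * g s))
        = ∫ s in (0:ℝ)..a, (Real.exp a - Real.exp s) * g s := by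
      refine intervalIntegral.integral_congr fun s hs => ?_
      show ∫ σ in s..a, Real.exp σ * g s = _
      rw [intervalIntegral.integral_mul_const, integral_exp]
    have hR : (∫ σ in (0:ℝ)..a, ∫ s in (0:ℝ)..σ, Real.exp σ * g s)
        = ∫ σ in (0:ℝ)..a, Real.exp σ * (r σ - 1) := by
      refine intervalIntegral.integral_congr fun σ hσ => ?_
      rw [uIcc_of_le ha] at hσ
      show ∫ s in (0:ℝ)..σ, Real.exp σ * g s = _
      rw [intervalIntegral.integral_const_mul]
      have h1 := hreq' σ hσ.1
      have h2 : ∫ s in (0:ℝ)..σ, g s = r σ - 1 := by linarith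
      rw [h2]
    have hL2 : (∫ s in (0:ℝ)..a, (Real.exp a - Real.exp s) * g s)
        = Real.exp a * (r a - 1) - ∫ s in (0:ℝ)..a, Real.exp s * g s := by
      have h1 : ∀ s : ℝ, (Real.exp a - Real.exp s) * g s
          = Real.exp a * g s - Real.exp s * g s := fun s => by ring
      simp_rw [h1]
      rw [intervalIntegral.integral_sub (hgi.const_mul _) hegi,
        intervalIntegral.integral_const_mul]
      have h2 := hreq' a ha
      have h3 : ∫ s in (0:ℝ)..a, g s = r a - 1 := by linarith
      rw [h3]
    have hR2 : (∫ σ in (0:ℝ)..a, Real.exp σ * (r σ - 1))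
        = (∫ σ in (0:ℝ)..a, Real.exp σ * r σ) - (Real.exp a - 1) := by
      have h1 : ∀ σ : ℝ, Real.exp σ * (r σ - 1) = Real.exp σ * r σ - Real.exp σ :=
        fun σ => by ring
      simp_rw [h1]
      rw [intervalIntegral.integral_sub heri (Real.continuous_exp.intervalIntegrable 0 a),
        integral_exp, Real.exp_zero]
    have hkey : (∫ σ in (0:ℝ)..a, Real.exp σ * r σ) + (∫ s in (0:ℝ)..a, Real.exp s * g s)
        = Real.exp a * r a - 1 := by
      rw [hL, hR] at hswap
      rw [hL2] at hswap
      rw [hR2] at hswap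
      nlinarith [hswap]
    have hJ : (∫ σ in (0:ℝ)..a, Real.exp (-(a - σ)) * (r σ + g σ))
        = Real.exp (-a) * ((∫ σ in (0:ℝ)..a, Real.exp σ * r σ)
            + ∫ σ in (0:ℝ)..a, Real.exp σ * g σ) := by
      have h1 : ∀ σ : ℝ, Real.exp (-(a - σ)) * (r σ + g σ)
          = Real.exp (-a) * (Real.exp σ * r σ + Real.exp σ * g σ) := by
        intro σ
        rw [show -(a - σ) = -a + σ by ring, Real.exp_add]
        ring
      simp_rw [h1]
      rw [intervalIntegral.integral_const_mul, intervalIntegral.integral_add heri hegi]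
    rw [hJ, hkey]
    have h5 : Real.exp (-a) * Real.exp a = 1 := by rw [← Real.exp_add]; simp
    have h6 : Real.exp (-a) * (Real.exp a * r a - 1) = r a - Real.exp (-a) := by
      rw [mul_sub, ← mul_assoc, h5, one_mul, mul_one]
    linarith
  -- Step C: identification of the convolution against g with G'
  have stepC : ∀ σ : ℝ, 0 ≤ σ → (∫ s in (0:ℝ)..σ, g (σ - s) * fc s) = G' σ := by
    intro σ hσ
    haveI hfinres : IsFiniteMeasure (volume.restrict (Ioc (0:ℝ) σ)) :=
      aux_finite_restrict (by simp [Real.volume_Ioc])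
    obtain ⟨Cr, hCr0, hCr⟩ := rbdd σ
    obtain ⟨Cf, hCf⟩ := (isCompact_Icc (a := (0:ℝ)) (b := σ)).exists_bound_of_continuousOn
      hfcc.continuousOn
    set Cf' := max Cf 0 with hCf'
    have hCf'0 : 0 ≤ Cf' := le_max_right _ _
    have hfcb : ∀ s ∈ Ioc (0:ℝ) σ, |fc s| ≤ Cf' := by
      intro s hs
      refine le_trans ?_ (le_max_left _ _)
      have := hCf s ⟨hs.1.le, hs.2⟩
      rwa [Real.norm_eq_abs] at this
    have hmain : ∀ (μ : Measure ℝ), IsFiniteMeasure μ → (∀ᵐ u ∂μ, u ∈ Icc (-τ) 0) →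
        (∫ s in Ioc (0:ℝ) σ, ((∫ u, r (σ - s + u) ∂μ) * fc s))
          = ∫ u, y₀ (σ + u) ∂μ := by
      intro μ hfin hae
      haveI := hfin
      have hjm : StronglyMeasurable (Function.uncurry fun s u => r (σ - s + u) * fc s) :=
        ((rmeas.comp ((measurable_const.sub measurable_fst).add measurable_snd)).mul
          (hfcc.measurable.comp measurable_fst)).stronglyMeasurable
      have hres0 : (volume.restrict (Ioc (0:ℝ) σ)) (Ioc (0:ℝ) σ)ᶜ = 0 := by
        rw [Measure.restrict_apply measurableSet_Ioc.compl]
        simp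
      have hμ0 : μ (Icc (-τ) 0)ᶜ = 0 := by rwa [ae_iff] at hae
      have hf1 : Integrable (Function.uncurry fun s u => r (σ - s + u) * fc s)
          ((volume.restrict (Ioc (0:ℝ) σ)).prod μ) := by
        refine aux_integrable_of_bound _ hjm.aestronglyMeasurable (C := Cr * Cf') ?_
        filter_upwards [aux_ae_prod_mem _ _ hres0 hμ0] with p hp
        rw [Function.uncurry]
        simp only [abs_mul]
        refine mul_le_mul ?_ (hfcb _ hp.1) (abs_nonneg _) hCr0
        exact hCr _ (by linarith [hp.1.1, hp.2.2])
      have hswap := integral_integral_swap (f := fun s u => r (σ - s + u) * fc s) hf1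
      have hinner : ∀ u : ℝ, u ≤ 0 →
          (∫ s in Ioc (0:ℝ) σ, r (σ - s + u) * fc s) = y₀ (σ + u) := by
        intro u hu
        have harg : ∀ s : ℝ, σ - s + u = (σ + u) - s := fun s => by ring
        by_cases hσu : 0 ≤ σ + u
        · have hle : σ + u ≤ σ := by linarith
          have hbig : IntegrableOn (fun s => r ((σ + u) - s) * fc s) (Ioc (0:ℝ) σ) := by
            refine aux_integrable_of_bound _ ?_ (C := Cr * Cf') ?_
            · exact ((rmeas.comp (measurable_const.sub measurable_id)).mul
                hfcc.measurable).aestronglyMeasurable.restrict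
            · filter_upwards [ae_restrict_mem measurableSet_Ioc] with s hs
              rw [abs_mul]
              refine mul_le_mul ?_ (hfcb _ hs) (abs_nonneg _) hCr0
              exact hCr _ (by linarith [hs.1])
          have h1i : IntervalIntegrable (fun s => r ((σ + u) - s) * fc s) volume 0 (σ + u) := by
            rw [intervalIntegrable_iff, uIoc_of_le hσu]
            exact hbig.mono_set (Ioc_subset_Ioc_right hle)
          have h2i : IntervalIntegrable (fun s => r ((σ + u) - s) * fc s) volume (σ + u) σ := by
            rw [intervalIntegrable_iff, uIoc_of_le hle]
            exact hbig.mono_set (Ioc_subset_Ioc_left hσu)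
          have hz : (∫ s in (σ + u)..σ, r ((σ + u) - s) * fc s) = 0 := by
            rw [intervalIntegral.integral_of_le hle]
            have hzz : ∀ s ∈ Ioc (σ + u) σ, r ((σ + u) - s) * fc s = 0 := by
              intro s hs
              rw [hr0 _ (by linarith [hs.1]), zero_mul]
            rw [setIntegral_congr_fun measurableSet_Ioc hzz]
            simp
          calc ∫ s in Ioc (0:ℝ) σ, r (σ - s + u) * fc s
              = ∫ s in (0:ℝ)..σ, r ((σ + u) - s) * fc s := by
                rw [intervalIntegral.integral_of_le hσ]
                exact setIntegral_congr_fun measurableSet_Ioc (fun s _ => by rw [harg])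
            _ = (∫ s in (0:ℝ)..(σ + u), r ((σ + u) - s) * fc s)
                + ∫ s in (σ + u)..σ, r ((σ + u) - s) * fc s :=
                (intervalIntegral.integral_add_adjacent_intervals h1i h2i).symm
            _ = y₀ (σ + u) := by rw [hz, add_zero, hy₀]
        · push_neg at hσu
          rw [hy0neg _ hσu.le]
          have hzz : ∀ s ∈ Ioc (0:ℝ) σ, r (σ - s + u) * fc s = 0 := by
            intro s hs
            rw [hr0 _ (by linarith [hs.1]), zero_mul]
          rw [setIntegral_congr_fun measurableSet_Ioc hzz]
          simp
      calc ∫ s in Ioc (0:ℝ) σ, ((∫ u, r (σ - s + u) ∂μ) * fc s)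
          = ∫ s in Ioc (0:ℝ) σ, ∫ u, r (σ - s + u) * fc s ∂μ :=
            setIntegral_congr_fun measurableSet_Ioc
              (fun s _ => (MeasureTheory.integral_mul_const _ _).symm)
        _ = ∫ u, (∫ s in Ioc (0:ℝ) σ, r (σ - s + u) * fc s) ∂μ := hswap
        _ = ∫ u, y₀ (σ + u) ∂μ := by
            refine integral_congr_ae ?_
            filter_upwards [hae] with u hu
            exact hinner u hu.2
    -- split g and conclude
    have hparam : ∀ (μ : Measure ℝ), IsFiniteMeasure μ → (∀ᵐ u ∂μ, u ∈ Icc (-τ) 0) →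
        IntegrableOn (fun s => (∫ u, r (σ - s + u) ∂μ) * fc s) (Ioc (0:ℝ) σ) := by
      intro μ hfin hae
      haveI := hfin
      have hμmeas : Measurable fun s => ∫ u, r (σ - s + u) ∂μ :=
        (((rmeas.comp ((measurable_const.sub measurable_fst).add
          measurable_snd)).stronglyMeasurable).integral_prod_right' (ν := μ)).measurable
      refine aux_integrable_of_bound _
        ((hμmeas.mul hfcc.measurable).aestronglyMeasurable.restrict)
        (C := Cr * (μ univ).toReal * Cf') ?_
      filter_upwards [ae_restrict_mem measurableSet_Ioc] with s hs
      rw [abs_mul]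
      refine mul_le_mul ?_ (hfcb _ hs) (abs_nonneg _) (by positivity)
      have : ‖∫ u, r (σ - s + u) ∂μ‖ ≤ Cr * (μ univ).toReal := by
        refine norm_integral_le_of_norm_le_const ?_
        filter_upwards [hae] with u hu
        rw [Real.norm_eq_abs]
        exact hCr _ (by linarith [hs.1, hu.2])
      rwa [Real.norm_eq_abs] at this
    calc ∫ s in (0:ℝ)..σ, g (σ - s) * fc s
        = ∫ s in Ioc (0:ℝ) σ, (((∫ u, r (σ - s + u) ∂μp) * fc s)
            - ((∫ u, r (σ - s + u) ∂μn) * fc s)) := by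
          rw [intervalIntegral.integral_of_le hσ]
          refine setIntegral_congr_fun measurableSet_Ioc (fun s _ => ?_)
          rw [hgdef]
          simp only
          ring
      _ = (∫ s in Ioc (0:ℝ) σ, ((∫ u, r (σ - s + u) ∂μp) * fc s))
            - ∫ s in Ioc (0:ℝ) σ, ((∫ u, r (σ - s + u) ∂μn) * fc s) :=
          integral_sub (hparam μp inferInstance haeμp) (hparam μn inferInstance haeμn)
      _ = (∫ u, y₀ (σ + u) ∂μp) - ∫ u, y₀ (σ + u) ∂μn := by
          rw [hmain μp inferInstance haeμp, hmain μn inferInstance haeμn]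
      _ = G' σ := by rw [hG'def]
  -- Step B: the main pointwise identity
  have stepB : ∀ t : ℝ, 0 < t →
      (∫ s in (0:ℝ)..t, Real.exp (-(t - s)) * f s)
        = y₀ t - ∫ σ in (0:ℝ)..t, Real.exp (-(t - σ)) * (y₀ σ + G' σ) := by
    intro t ht
    have h0t : (0:ℝ) ≤ t := ht.le
    obtain ⟨Cr, hCr0, hCr⟩ := rbdd t
    obtain ⟨Cg, hCg0, hCg⟩ := gbd t
    obtain ⟨Cf, hCf⟩ := (isCompact_Icc (a := (0:ℝ)) (b := t)).exists_bound_of_continuousOn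
      hfcc.continuousOn
    set Cf' := max Cf 0 with hCf'
    have hCf'0 : 0 ≤ Cf' := le_max_right _ _
    have hfcb : ∀ s ∈ Ioc (0:ℝ) t, |fc s| ≤ Cf' := by
      intro s hs
      refine le_trans ?_ (le_max_left _ _)
      have := hCf s ⟨hs.1.le, hs.2⟩
      rwa [Real.norm_eq_abs] at this
    -- measurable version of the inner kernel integral
    set Jfun : ℝ → ℝ := fun a => ∫ x, ({p : ℝ × ℝ | 0 < p.2 ∧ p.2 ≤ p.1}).indicator
        (fun p => Real.exp (-(p.1 - p.2)) * (r p.2 + g p.2)) (a, x) with hJdef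
    have hSm : MeasurableSet {p : ℝ × ℝ | 0 < p.2 ∧ p.2 ≤ p.1} :=
      MeasurableSet.inter (measurableSet_lt measurable_const measurable_snd)
        (measurableSet_le measurable_snd measurable_fst)
    have hJm : Measurable Jfun := by
      have h1 : StronglyMeasurable (({p : ℝ × ℝ | 0 < p.2 ∧ p.2 ≤ p.1}).indicator
          (fun p => Real.exp (-(p.1 - p.2)) * (r p.2 + g p.2))) :=
        ((((measurable_fst.sub measurable_snd).neg.exp).mul
          ((rmeas.comp measurable_snd).add (gmeas.comp measurable_snd))).indicator
          hSm).stronglyMeasurable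
      exact (h1.integral_prod_right' (ν := volume)).measurable
    have hJeq : ∀ a : ℝ, 0 ≤ a →
        Jfun a = ∫ x in (0:ℝ)..a, Real.exp (-(a - x)) * (r x + g x) := by
      intro a ha'
      rw [hJdef]
      simp only
      have h1 : ∀ x : ℝ, ({p : ℝ × ℝ | 0 < p.2 ∧ p.2 ≤ p.1}).indicator
          (fun p => Real.exp (-(p.1 - p.2)) * (r p.2 + g p.2)) (a, x)
          = (Ioc (0:ℝ) a).indicator (fun x => Real.exp (-(a - x)) * (r x + g x)) x := by
        intro x; simp only [indicator_apply, mem_setOf_eq, mem_Ioc]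
      simp_rw [h1]
      rw [integral_indicator measurableSet_Ioc, ← intervalIntegral.integral_of_le ha']
    have hJbd : ∀ a : ℝ, 0 ≤ a → a ≤ t → |Jfun a| ≤ (Cr + Cg) * t := by
      intro a ha1 ha2
      rw [hJeq a ha1, ← Real.norm_eq_abs]
      have hb : ∀ x ∈ Set.uIoc (0:ℝ) a, ‖Real.exp (-(a - x)) * (r x + g x)‖ ≤ Cr + Cg := by
        intro x hx
        rw [uIoc_of_le ha1] at hx
        rw [norm_mul]
        have he : ‖Real.exp (-(a - x))‖ ≤ 1 := by
          rw [Real.norm_eq_abs, abs_of_pos (Real.exp_pos _)]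
          exact Real.exp_le_one_iff.mpr (by linarith [hx.2])
        have hrg : ‖r x + g x‖ ≤ Cr + Cg := by
          rw [Real.norm_eq_abs]
          refine (abs_add_le _ _).trans ?_
          exact add_le_add (hCr x (by linarith [hx.2])) (hCg x (by linarith [hx.2]))
        calc ‖Real.exp (-(a - x))‖ * ‖r x + g x‖ ≤ 1 * (Cr + Cg) :=
              mul_le_mul he hrg (norm_nonneg _) zero_le_one
          _ = Cr + Cg := one_mul _
      refine (intervalIntegral.norm_integral_le_of_norm_le_const hb).trans ?_
      rw [abs_of_nonneg (by linarith : (0:ℝ) ≤ a - 0)]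
      have h2 : a - 0 ≤ t := by linarith
      nlinarith [mul_le_mul_of_nonneg_left h2 (by positivity : (0:ℝ) ≤ Cr + Cg)]
    -- rewrite the target using Step A
    have h1 : (∫ s in (0:ℝ)..t, Real.exp (-(t - s)) * f s)
        = ∫ s in (0:ℝ)..t, (r (t - s) * fc s - Jfun (t - s) * fc s) := by
      refine intervalIntegral.integral_congr fun s hs => ?_
      rw [uIcc_of_le h0t] at hs
      show Real.exp (-(t - s)) * f s = _
      rw [← hfc_eq s hs.1]
      have ha : (0:ℝ) ≤ t - s := by linarith [hs.2]
      rw [hJeq _ ha, stepA (t - s) ha]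
      ring
    have hrfi : IntervalIntegrable (fun s => r (t - s) * fc s) volume 0 t := by
      refine aux_intervalIntegrable h0t
        (((rmeas.comp (measurable_const.sub measurable_id)).mul
          hfcc.measurable).aestronglyMeasurable.restrict) (C := Cr * Cf') (fun s hs => ?_)
      rw [abs_mul]
      exact mul_le_mul (hCr _ (by linarith [hs.1])) (hfcb _ hs) (abs_nonneg _) hCr0
    have hJfi : IntervalIntegrable (fun s => Jfun (t - s) * fc s) volume 0 t := by
      refine aux_intervalIntegrable h0t
        (((hJm.comp (measurable_const.sub measurable_id)).mul
          hfcc.measurable).aestronglyMeasurable.restrict)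
        (C := (Cr + Cg) * t * Cf') (fun s hs => ?_)
      rw [abs_mul]
      exact mul_le_mul (hJbd _ (by linarith [hs.2]) (by linarith [hs.1]))
        (hfcb _ hs) (abs_nonneg _) (by positivity)
    have h2 : (∫ s in (0:ℝ)..t, (r (t - s) * fc s - Jfun (t - s) * fc s))
        = y₀ t - ∫ s in (0:ℝ)..t, Jfun (t - s) * fc s := by
      rw [intervalIntegral.integral_sub hrfi hJfi, hy₀]
    -- triangle swap on the remaining term
    set F2 : ℝ → ℝ → ℝ := fun σ s => Real.exp (-(t - σ)) * ((r (σ - s) + g (σ - s)) * fc s)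
      with hF2
    have hF2m : StronglyMeasurable (Function.uncurry F2) := by
      refine Measurable.stronglyMeasurable ?_
      exact ((measurable_const.sub measurable_fst).neg.exp).mul
        ((((rmeas.comp (measurable_fst.sub measurable_snd))).add
          (gmeas.comp (measurable_fst.sub measurable_snd))).mul
          (hfcc.measurable.comp measurable_snd))
    have hF2b : ∀ σ ∈ Ioc (0:ℝ) t, ∀ s ∈ Ioc (0:ℝ) t, |F2 σ s| ≤ (Cr + Cg) * Cf' := by
      intro σ hσ s hs
      rw [hF2]
      simp only
      rw [abs_mul, abs_mul]
      have he : |Real.exp (-(t - σ))| ≤ 1 := by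
        rw [abs_of_pos (Real.exp_pos _)]
        exact Real.exp_le_one_iff.mpr (by linarith [hσ.2])
      have hrg : |r (σ - s) + g (σ - s)| ≤ Cr + Cg := by
        refine (abs_add_le _ _).trans ?_
        exact add_le_add (hCr _ (by linarith [hσ.2, hs.1])) (hCg _ (by linarith [hσ.2, hs.1]))
      calc |Real.exp (-(t - σ))| * (|r (σ - s) + g (σ - s)| * |fc s|)
          ≤ 1 * ((Cr + Cg) * Cf') := by
            refine mul_le_mul he ?_ (by positivity) zero_le_one
            exact mul_le_mul hrg (hfcb _ hs) (abs_nonneg _) (by positivity)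
        _ = (Cr + Cg) * Cf' := one_mul _
    have h3 : (∫ s in (0:ℝ)..t, Jfun (t - s) * fc s)
        = ∫ s in (0:ℝ)..t, (∫ σ in s..t, F2 σ s) := by
      refine intervalIntegral.integral_congr fun s hs => ?_
      rw [uIcc_of_le h0t] at hs
      show Jfun (t - s) * fc s = _
      rw [hJeq _ (by linarith [hs.2] : (0:ℝ) ≤ t - s)]
      set φ : ℝ → ℝ := fun x => Real.exp (-((t - s) - x)) * ((r x + g x) * fc s) with hφ
      have e1 : (∫ x in (0:ℝ)..(t - s), Real.exp (-((t - s) - x)) * (r x + g x)) * fc s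
          = ∫ x in (0:ℝ)..(t - s), φ x := by
        rw [← intervalIntegral.integral_mul_const]
        refine intervalIntegral.integral_congr fun x _ => ?_
        rw [hφ]; ring
      have e2 : (∫ σ in s..t, F2 σ s) = ∫ σ in s..t, φ (σ - s) := by
        refine intervalIntegral.integral_congr fun σ _ => ?_
        rw [hF2, hφ]
        simp only
        rw [show (t - s) - (σ - s) = t - σ by ring]
      have e3 : (∫ σ in s..t, φ (σ - s)) = ∫ x in (0:ℝ)..(t - s), φ x := by
        rw [intervalIntegral.integral_comp_sub_right φ s, sub_self]
      rw [e1, e2, e3]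
    have h4 := aux_tri_swap h0t F2 hF2m (C := (Cr + Cg) * Cf') hF2b
    have h5 : (∫ σ in (0:ℝ)..t, ∫ s in (0:ℝ)..σ, F2 σ s)
        = ∫ σ in (0:ℝ)..t, Real.exp (-(t - σ)) * (y₀ σ + G' σ) := by
      refine intervalIntegral.integral_congr fun σ hσ => ?_
      rw [uIcc_of_le h0t] at hσ
      show (∫ s in (0:ℝ)..σ, F2 σ s) = _
      have e1 : (∫ s in (0:ℝ)..σ, F2 σ s)
          = Real.exp (-(t - σ)) * ∫ s in (0:ℝ)..σ, (r (σ - s) + g (σ - s)) * fc s := by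
        rw [hF2, ← intervalIntegral.integral_const_mul]
      have hri : IntervalIntegrable (fun s => r (σ - s) * fc s) volume 0 σ := by
        refine aux_intervalIntegrable hσ.1
          (((rmeas.comp (measurable_const.sub measurable_id)).mul
            hfcc.measurable).aestronglyMeasurable.restrict) (C := Cr * Cf') (fun s hs => ?_)
        rw [abs_mul]
        refine mul_le_mul (hCr _ (by linarith [hs.1, hσ.2])) ?_ (abs_nonneg _) hCr0
        exact hfcb _ ⟨hs.1, le_trans hs.2 hσ.2⟩
      have hgi : IntervalIntegrable (fun s => g (σ - s) * fc s) volume 0 σ := by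
        refine aux_intervalIntegrable hσ.1
          (((gmeas.comp (measurable_const.sub measurable_id)).mul
            hfcc.measurable).aestronglyMeasurable.restrict) (C := Cg * Cf') (fun s hs => ?_)
        rw [abs_mul]
        refine mul_le_mul (hCg _ (by linarith [hs.1, hσ.2])) ?_ (abs_nonneg _) hCg0
        exact hfcb _ ⟨hs.1, le_trans hs.2 hσ.2⟩
      have e2 : (∫ s in (0:ℝ)..σ, (r (σ - s) + g (σ - s)) * fc s)
          = (∫ s in (0:ℝ)..σ, r (σ - s) * fc s) + ∫ s in (0:ℝ)..σ, g (σ - s) * fc s := by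
        rw [← intervalIntegral.integral_add hri hgi]
        refine intervalIntegral.integral_congr fun s _ => ?_
        ring
      rw [e1, e2, stepC σ hσ.1, hy₀]
    rw [h1, h2, h3, h4, h5]
  -- final assembly
  have hHm : Measurable (fun σ => y₀ σ + G' σ) := hy0m.add hG'm
  have hT := aux_kernel_L2 hHm (hy0L2.add hG'L2)
  have final : (fun t => y₀ t - ∫ σ in (0:ℝ)..t, Real.exp (-(t - σ)) * (y₀ σ + G' σ))
      =ᵐ[volume.restrict (Ioi (0:ℝ))]
      (fun t => ∫ s in (0:ℝ)..t, Real.exp (-(t - s)) * f s) := by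
    filter_upwards [ae_restrict_mem measurableSet_Ioi] with t ht
    exact (stepB t ht).symm
  exact (hy0L2.sub hT).ae_eq final
end
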